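/- arXiv:1112.4306 — 6 statements merged into one kernel-verified Lean document; each statement's English description precedes it below -/
import Mathlib

section
/- Let 𝒜 be an arrangement of 9 pairwise distinct lines in ℂℙ² and suppose that five of the lines L₁, L₂, L₃, L₄, L₅ pass through a common point. Then at least one of the lines L₁, …, L₅ contains at most two multiple points of 𝒜. -/
/-- We work with the complex projective plane modeled on ℂ³:
points of ℂℙ² are 1-dimensional linear subspaces of ℂ³ and lines are
2-dimensional linear subspaces. -/
abbrev V3 := Fin 3 → ℂ

/-- A point of ℂℙ², viewed as a 1-dimensional subspace of ℂ³. -/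
def IsPoint (p : Submodule ℂ V3) : Prop := Module.finrank ℂ p = 1

/-- A line of ℂℙ², viewed as a 2-dimensional subspace of ℂ³. -/
def IsLine (L : Submodule ℂ V3) : Prop := Module.finrank ℂ L = 2

/-- The multiplicity of a point `p` in the arrangement `A`:
the number of lines of `A` passing through `p`. -/
noncomputable def mult (A : Finset (Submodule ℂ V3)) (p : Submodule ℂ V3) : ℕ :=
  {L | L ∈ A ∧ p ≤ L}.ncard

/-- `nPts A r` is the number `n_r` of points of multiplicity exactly `r` in `A`. -/
noncomputable def nPts (A : Finset (Submodule ℂ V3)) (r : ℕ) : ℕ :=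
  {p | IsPoint p ∧ mult A p = r}.ncard

attribute [local instance] Classical.propDecidable

/-- Two distinct points lie on at most one common line. -/
theorem line_unique' {M M' p q : Submodule ℂ V3} (hM : IsLine M) (hM' : IsLine M')
    (hp : IsPoint p) (hq : IsPoint q) (hpq : p ≠ q)
    (h1 : p ≤ M) (h2 : q ≤ M) (h3 : p ≤ M') (h4 : q ≤ M') : M = M' := by
  have key : ∀ N : Submodule ℂ V3, IsLine N → p ≤ N → q ≤ N → p ⊔ q = N := by
    intro N hN hpN hqN
    have hle : p ⊔ q ≤ N := sup_le hpN hqN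
    have hinf : p ⊓ q = ⊥ := by
      by_contra hne
      have h1' : p ⊓ q = p := Submodule.eq_of_le_of_finrank_le inf_le_left (by
        rw [hp]
        exact Nat.one_le_iff_ne_zero.mpr (fun h0 => hne (Submodule.finrank_eq_zero.mp h0)))
      have h2' : p ⊓ q = q := Submodule.eq_of_le_of_finrank_le inf_le_right (by
        rw [hq]
        exact Nat.one_le_iff_ne_zero.mpr (fun h0 => hne (Submodule.finrank_eq_zero.mp h0)))
      exact hpq (h1' ▸ h2')
    have hsup : Module.finrank ℂ ↥(p ⊔ q) = 2 := by
      have := Submodule.finrank_sup_add_finrank_inf_eq p q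
      rw [hinf] at this
      simp only [finrank_bot, add_zero] at this
      rw [this, hp, hq]
    exact Submodule.eq_of_le_of_finrank_le hle (by rw [hN, hsup])
  rw [← key M hM h1 h2, key M' hM' h3 h4]

theorem mult_eq_card' (A : Finset (Submodule ℂ V3)) (p : Submodule ℂ V3) :
    mult A p = (A.filter (fun M => p ≤ M)).card := by
  rw [mult, ← Set.ncard_coe_finset]
  congr 1
  ext M
  simp [Finset.mem_filter]

/-- A multiple point on `L i` distinct from `P` lies on two distinct lines of `A`
that are not among the `L j`. -/
theorem two_lines' (A : Finset (Submodule ℂ V3)) (hlines : ∀ M ∈ A, IsLine M)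
    (L : Fin 5 → Submodule ℂ V3) (hmem : ∀ i, L i ∈ A)
    (P : Submodule ℂ V3) (hP : IsPoint P) (hPL : ∀ i, P ≤ L i)
    (i : Fin 5) (p : Submodule ℂ V3) (hp : IsPoint p) (hm : 3 ≤ mult A p)
    (hpL : p ≤ L i) (hpP : p ≠ P) :
    ∃ M N, M ∈ A \ Finset.image L Finset.univ ∧ N ∈ A \ Finset.image L Finset.univ ∧
      M ≠ N ∧ p ≤ M ∧ p ≤ N := by
  classical
  set C := A.filter (fun M => p ≤ M) with hC
  have hCcard : 3 ≤ C.card := by rw [← mult_eq_card']; exact hm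
  set imgs := Finset.image L Finset.univ with himgs
  have hinter : C ∩ imgs ⊆ {L i} := by
    intro M hMmem
    rw [Finset.mem_inter, hC, Finset.mem_filter] at hMmem
    obtain ⟨⟨hMA, hpM⟩, hMimg⟩ := hMmem
    obtain ⟨j, _, rfl⟩ := Finset.mem_image.mp hMimg
    rw [Finset.mem_singleton]
    exact line_unique' (hlines _ (hmem j)) (hlines _ (hmem i)) hp hP hpP hpM (hPL j) hpL (hPL i)
  have hdiff : 2 ≤ (C \ imgs).card := by
    have h1 : (C \ imgs).card + (C ∩ imgs).card = C.card := Finset.card_sdiff_add_card_inter C imgs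
    have h2 : (C ∩ imgs).card ≤ 1 := le_trans (Finset.card_le_card hinter) (by simp)
    omega
  obtain ⟨M, hM, N, hN, hMN⟩ := Finset.one_lt_card.mp (by omega : 1 < (C \ imgs).card)
  have hsub : C \ imgs ⊆ A \ imgs := Finset.sdiff_subset_sdiff (Finset.filter_subset _ _) le_rfl
  refine ⟨M, N, hsub hM, hsub hN, hMN, ?_, ?_⟩
  · exact (Finset.mem_filter.mp (Finset.mem_sdiff.mp hM).1).2
  · exact (Finset.mem_filter.mp (Finset.mem_sdiff.mp hN).1).2

/-- if 𝒜 is an arrangement of 9 pairwise distinct lines in ℂℙ² and five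
of its lines pass through a common point, then at least one of these five lines
contains at most two multiple points (points of multiplicity ≥ 3) of 𝒜. -/
theorem five_lines_through_a_point (A : Finset (Submodule ℂ V3))
    (hcard : A.card = 9) (hlines : ∀ L ∈ A, IsLine L)
    (L : Fin 5 → Submodule ℂ V3) (hinj : Function.Injective L) (hmem : ∀ i, L i ∈ A)
    (P : Submodule ℂ V3) (hP : IsPoint P) (hPL : ∀ i, P ≤ L i) :
    ∃ i, {p | IsPoint p ∧ 3 ≤ mult A p ∧ p ≤ L i}.ncard ≤ 2 := by
  classical
  by_contra hcon
  push_neg at hcon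
  set S : Fin 5 → Set (Submodule ℂ V3) :=
    fun i => {p | IsPoint p ∧ 3 ≤ mult A p ∧ p ≤ L i} with hS
  -- each S i is finite with at least 3 elements
  have hconS : ∀ i, 2 < (S i).ncard := hcon
  have hfin : ∀ i, (S i).Finite := by
    intro i
    by_contra h
    have := Set.Infinite.ncard h
    have := hconS i
    omega
  -- extract two points of S i different from P
  have hTwo : ∀ i, ∃ a b, a ∈ S i \ {P} ∧ b ∈ S i \ {P} ∧ a ≠ b := by
    intro i
    have h1 : (S i).ncard ≤ (S i \ {P}).ncard + ({P} : Set (Submodule ℂ V3)).ncard :=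
      Set.ncard_le_ncard_diff_add_ncard _ _ (Set.finite_singleton P)
    have h2 : 1 < (S i \ {P}).ncard := by
      have := hconS i
      simp [Set.ncard_singleton] at h1
      omega
    exact (Set.one_lt_ncard_iff ((hfin i).diff)).mp h2
  choose a b ha hb hab using hTwo
  set pts : Fin 5 × Fin 2 → Submodule ℂ V3 :=
    fun x => if x.2 = 0 then a x.1 else b x.1 with hptsdef
  have hpts_mem : ∀ x : Fin 5 × Fin 2, pts x ∈ S x.1 \ {P} := by
    intro x
    by_cases h : x.2 = 0 <;> simp [hptsdef, h, ha, hb]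
  have hpts_S : ∀ x : Fin 5 × Fin 2, pts x ∈ S x.1 := fun x => (hpts_mem x).1
  have hpts_neP : ∀ x : Fin 5 × Fin 2, pts x ≠ P := by
    intro x
    have := (hpts_mem x).2
    simpa using this
  -- the chosen points are pairwise distinct
  have hpts_ne : ∀ x y : Fin 5 × Fin 2, x ≠ y → pts x ≠ pts y := by
    intro x y hxy heq
    obtain ⟨x1, x2⟩ := x
    obtain ⟨y1, y2⟩ := y
    by_cases h1 : x1 = y1
    · -- same line, different slot
      subst h1
      have h2 : x2 ≠ y2 := fun h => hxy (by rw [h])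
      fin_cases x2 <;> fin_cases y2
      · exact h2 rfl
      · exact hab x1 (by simpa [hptsdef] using heq)
      · exact hab x1 (by simpa [hptsdef] using heq.symm)
      · exact h2 rfl
    · -- different lines: both points on L x.1 and L y.1, distinct from P
      have hx := hpts_S (x1, x2)
      have hy := hpts_S (y1, y2)
      rw [hS] at hx hy
      have hLL : L x1 = L y1 :=
        line_unique' (hlines _ (hmem x1)) (hlines _ (hmem y1)) hx.1 hP (hpts_neP (x1, x2))
          hx.2.2 (hPL x1) (heq ▸ hy.2.2) (hPL y1)
      exact h1 (hinj hLL)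
  -- choose, for each point, two extra lines through it
  have hchoice : ∀ x : Fin 5 × Fin 2,
      ∃ M N, M ∈ A \ Finset.image L Finset.univ ∧ N ∈ A \ Finset.image L Finset.univ ∧
        M ≠ N ∧ pts x ≤ M ∧ pts x ≤ N := by
    intro x
    have hx := hpts_S x
    rw [hS] at hx
    exact two_lines' A hlines L hmem P hP hPL x.1 (pts x) hx.1 hx.2.1 hx.2.2 (hpts_neP x)
  choose M N hM hN hMN hpM hpN using hchoice
  set B := A \ Finset.image L Finset.univ with hB
  set f : Fin 5 × Fin 2 → Finset (Submodule ℂ V3) := fun x => {M x, N x} with hf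
  have hmaps : ∀ x ∈ (Finset.univ : Finset (Fin 5 × Fin 2)), f x ∈ B.powersetCard 2 := by
    intro x _
    rw [Finset.mem_powersetCard]
    constructor
    · intro y hy
      rcases Finset.mem_insert.mp hy with h | h
      · exact h ▸ hM x
      · exact (Finset.mem_singleton.mp h) ▸ hN x
    · exact Finset.card_pair (hMN x)
  have hinjOn : Set.InjOn f (Finset.univ : Finset (Fin 5 × Fin 2)) := by
    intro x _ y _ heq
    by_contra hxy
    -- both pts x and pts y lie on M x and N x
    have hMy : pts y ≤ M x := by
      have : M x ∈ f y := heq ▸ (by simp [hf])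
      rcases Finset.mem_insert.mp this with h | h
      · exact h ▸ hpM y
      · exact (Finset.mem_singleton.mp h) ▸ hpN y
    have hNy : pts y ≤ N x := by
      have : N x ∈ f y := heq ▸ (by simp [hf])
      rcases Finset.mem_insert.mp this with h | h
      · exact h ▸ hpM y
      · exact (Finset.mem_singleton.mp h) ▸ hpN y
    have hlx : IsLine (M x) := hlines _ (Finset.mem_sdiff.mp (hM x)).1
    have hlx' : IsLine (N x) := hlines _ (Finset.mem_sdiff.mp (hN x)).1
    have hSx := hpts_S x
    have hSy := hpts_S y
    rw [hS] at hSx hSy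
    exact hMN x (line_unique' hlx hlx' hSx.1 hSy.1 (hpts_ne x y hxy)
      (hpM x) hMy (hpN x) hNy)
  have hcount := Finset.card_le_card_of_injOn f hmaps hinjOn
  have hBcard : B.card = 4 := by
    rw [hB, Finset.card_sdiff_of_subset]
    · rw [hcard, Finset.card_image_of_injective _ hinj]
      simp
    · intro M hMi
      obtain ⟨j, _, rfl⟩ := Finset.mem_image.mp hMi
      exact hmem j
  rw [Finset.card_powersetCard, hBcard] at hcount
  norm_num [Finset.card_univ] at hcount
  have h6 : Nat.choose 4 2 = 6 := by decide
  omega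
end

section
/- Let 𝒜 = {L₁, …, L₉} be an arrangement of 9 pairwise distinct lines in ℂℙ² such that no point lies on five or more lines, every line of 𝒜 passes through at least three multiple points, and the point L₁ ∩ L₂ ∩ L₃ ∩ L₄ is a quadruple point of 𝒜 (necessarily the unique one). Then every triple point of 𝒜 lies on L₁ ∪ L₂ ∪ L₃ ∪ L₄. -/
lemma inf_isPoint {X Y : Submodule ℂ V3} (hX : IsLine X) (hY : IsLine Y) (h : X ≠ Y) :
    IsPoint (X ⊓ Y) := by
  have h3 : Module.finrank ℂ V3 = 3 := by simp
  have hsum := Submodule.finrank_sup_add_finrank_inf_eq X Y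
  have hle : Module.finrank ℂ ↥(X ⊔ Y) ≤ 3 := (Submodule.finrank_le _).trans h3.le
  have hge : Module.finrank ℂ ↥X ≤ Module.finrank ℂ ↥(X ⊔ Y) :=
    Submodule.finrank_mono le_sup_left
  have hne : Module.finrank ℂ ↥(X ⊔ Y) ≠ 2 := by
    intro h2
    apply h
    have e1 : X = X ⊔ Y := Submodule.eq_of_le_of_finrank_eq le_sup_left (by rw [hX, h2])
    have e2 : Y = X ⊔ Y := Submodule.eq_of_le_of_finrank_eq le_sup_right (by rw [hY, h2])
    exact e1.trans e2.symm
  rw [IsLine] at hX hY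
  rw [IsPoint]
  omega

lemma point_eq {p X Y : Submodule ℂ V3} (hp : IsPoint p) (hXY : IsPoint (X ⊓ Y))
    (h1 : p ≤ X) (h2 : p ≤ Y) : p = X ⊓ Y :=
  Submodule.eq_of_le_of_finrank_eq (le_inf h1 h2) (hp.trans hXY.symm)

open Classical in
lemma mult_eq (A : Finset (Submodule ℂ V3)) (p : Submodule ℂ V3) :
    mult A p = (A.filter fun X => p ≤ X).card := by
  rw [mult, ← Set.ncard_coe_finset]
  congr 1
  ext X
  simp


/-- if 𝒜 is an arrangement of 9 pairwise distinct lines in ℂℙ² with no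
point of multiplicity ≥ 5, such that every line passes through at least three
multiple points, and L₁ ∩ L₂ ∩ L₃ ∩ L₄ is a quadruple point, then every triple
point of 𝒜 lies on L₁ ∪ L₂ ∪ L₃ ∪ L₄. -/
theorem triples_on_quadruple_lines (A : Finset (Submodule ℂ V3))
    (hcard : A.card = 9) (hlines : ∀ L ∈ A, IsLine L)
    (hm : ∀ p, IsPoint p → mult A p ≤ 4)
    (h3 : ∀ L ∈ A, 3 ≤ {p | IsPoint p ∧ 3 ≤ mult A p ∧ p ≤ L}.ncard)
    (L : Fin 4 → Submodule ℂ V3) (hinj : Function.Injective L) (hmem : ∀ i, L i ∈ A)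
    (Q : Submodule ℂ V3) (hQ : IsPoint Q) (hQL : ∀ i, Q ≤ L i) (hQ4 : mult A Q = 4) :
    ∀ p, IsPoint p → mult A p = 3 → ∃ i, p ≤ L i := by
  classical
  intro p hp hp3
  by_contra hcon
  push_neg at hcon
  -- two points on two distinct lines of A coincide
  have hpt_unique : ∀ {x y X Y : Submodule ℂ V3}, X ∈ A → Y ∈ A → X ≠ Y →
      IsPoint x → IsPoint y → x ≤ X → x ≤ Y → y ≤ X → y ≤ Y → x = y := by
    intro x y X Y hXA hYA hXY hx hy h1 h2 h3' h4
    have hinf := inf_isPoint (hlines X hXA) (hlines Y hYA) hXY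
    rw [point_eq hx hinf h1 h2, point_eq hy hinf h3' h4]
  set Ls : Finset (Submodule ℂ V3) := A.filter (fun X => Q ≤ X) with hLsdef
  have hLscard : Ls.card = 4 := by rw [← mult_eq A Q] at *; exact hQ4
  have hLssub : Finset.image L Finset.univ ⊆ Ls := by
    intro X hX
    simp only [Finset.mem_image, Finset.mem_univ, true_and] at hX
    obtain ⟨i, rfl⟩ := hX
    exact Finset.mem_filter.2 ⟨hmem i, hQL i⟩
  have himgcard : (Finset.image L Finset.univ).card = 4 := by
    rw [Finset.card_image_of_injective _ hinj, Finset.card_univ, Fintype.card_fin]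
  have hLsEq : Ls = Finset.image L Finset.univ :=
    (Finset.eq_of_subset_of_card_le hLssub (by omega)).symm
  have hLs_mem : ∀ X, X ∈ Ls ↔ ∃ i, L i = X := by
    intro X
    rw [hLsEq]
    simp
  set M : Finset (Submodule ℂ V3) := A \ Ls with hMdef
  have hLsA : Ls ⊆ A := Finset.filter_subset _ _
  have hMcard : M.card = 5 := by rw [hMdef, Finset.card_sdiff_of_subset hLsA, hcard, hLscard]
  have hMA : M ⊆ A := Finset.sdiff_subset
  have hAunion : M ∪ Ls = A := Finset.sdiff_union_of_subset hLsA
  -- at most one line of Ls through a point other than Q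
  have hLsfilter : ∀ x : Submodule ℂ V3, IsPoint x → x ≠ Q →
      (Ls.filter fun X => x ≤ X).card ≤ 1 := by
    intro x hx hxQ
    rw [Finset.card_le_one]
    intro X hX Y hY
    rw [Finset.mem_filter] at hX hY
    by_contra hne
    exact hxQ (hpt_unique (hLsA hX.1) (hLsA hY.1) hne hx hQ hX.2 hY.2
      (Finset.mem_filter.1 hX.1).2 (Finset.mem_filter.1 hY.1).2)
  -- degree in M
  have hd : ∀ x : Submodule ℂ V3,
      (A.filter fun X => x ≤ X).card
        = (M.filter fun X => x ≤ X).card + (Ls.filter fun X => x ≤ X).card := by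
    intro x
    rw [← hAunion, Finset.filter_union, Finset.card_union_of_disjoint]
    exact Finset.disjoint_filter_filter (Finset.sdiff_disjoint)
  -- the finsets T i of non-Q multiple points on L i
  have hTi : ∀ i : Fin 4, ∃ T : Finset (Submodule ℂ V3), 2 ≤ T.card ∧
      ∀ x ∈ T, IsPoint x ∧ 3 ≤ mult A x ∧ x ≤ L i ∧ x ≠ Q := by
    intro i
    have h := h3 (L i) (hmem i)
    have hfin : {p | IsPoint p ∧ 3 ≤ mult A p ∧ p ≤ L i}.Finite := by
      by_contra hinf
      rw [Set.Infinite.ncard hinf] at h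
      omega
    refine ⟨hfin.toFinset.erase Q, ?_, ?_⟩
    · have h1 : 3 ≤ hfin.toFinset.card := by rwa [Set.ncard_eq_toFinset_card _ hfin] at h
      have h2 := Finset.pred_card_le_card_erase (s := hfin.toFinset) (a := Q)
      omega
    · intro x hx
      have hxq := Finset.ne_of_mem_erase hx
      have hxm := Finset.mem_of_mem_erase hx
      rw [Set.Finite.mem_toFinset] at hxm
      exact ⟨hxm.1, hxm.2.1, hxm.2.2, hxq⟩
  choose T hT1 hT2 using hTi
  -- T i pairwise disjoint
  have hTdisj : ∀ i ∈ (Finset.univ : Finset (Fin 4)), ∀ j ∈ Finset.univ, i ≠ j →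
      Disjoint (T i) (T j) := by
    intro i _ j _ hij
    rw [Finset.disjoint_left]
    intro x hxi hxj
    obtain ⟨hx, _, hxi', hxQ⟩ := hT2 i x hxi
    obtain ⟨_, _, hxj', _⟩ := hT2 j x hxj
    exact hxQ (hpt_unique (hmem i) (hmem j) (fun h => hij (hinj h)) hx hQ hxi' hxj'
      (hQL i) (hQL j))
  set S0 : Finset (Submodule ℂ V3) := Finset.univ.biUnion T with hS0def
  have hS0card : 8 ≤ S0.card := by
    rw [hS0def, Finset.card_biUnion hTdisj]
    calc (8 : ℕ) = ∑ _i : Fin 4, 2 := by simp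
    _ ≤ ∑ i, (T i).card := Finset.sum_le_sum (fun i _ => hT1 i)
  have hpS0 : p ∉ S0 := by
    intro hps
    rw [hS0def, Finset.mem_biUnion] at hps
    obtain ⟨i, _, hpi⟩ := hps
    exact hcon i (hT2 i p hpi).2.2.1
  set e : Submodule ℂ V3 → Finset (Finset (Submodule ℂ V3)) :=
    fun x => (M.filter fun X => x ≤ X).powersetCard 2 with hedef
  set S : Finset (Submodule ℂ V3) := insert p S0 with hSdef
  have hSpt : ∀ x ∈ S, IsPoint x := by
    intro x hx
    rw [hSdef, Finset.mem_insert] at hx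
    rcases hx with rfl | hx
    · exact hp
    · rw [hS0def, Finset.mem_biUnion] at hx
      obtain ⟨i, _, hxi⟩ := hx
      exact (hT2 i x hxi).1
  have hedisj : ∀ x ∈ S, ∀ y ∈ S, x ≠ y → Disjoint (e x) (e y) := by
    intro x hx y hy hxy
    rw [Finset.disjoint_left]
    intro t htx hty
    rw [hedef, Finset.mem_powersetCard] at htx hty
    obtain ⟨X, Y, hXY, rfl⟩ := Finset.card_eq_two.1 htx.2
    have hXx := htx.1 (Finset.mem_insert_self X {Y})
    have hYx := htx.1 (Finset.mem_insert_of_mem (Finset.mem_singleton_self Y))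
    have hXy := hty.1 (Finset.mem_insert_self X {Y})
    have hYy := hty.1 (Finset.mem_insert_of_mem (Finset.mem_singleton_self Y))
    rw [Finset.mem_filter] at hXx hYx hXy hYy
    exact hxy (hpt_unique (hMA hXx.1) (hMA hYx.1) hXY (hSpt x hx) (hSpt y hy)
      hXx.2 hYx.2 hXy.2 hYy.2)
  -- upper bound
  have hub : ∑ x ∈ S, (e x).card ≤ 10 := by
    rw [← Finset.card_biUnion hedisj]
    have hsub : S.biUnion e ⊆ M.powersetCard 2 := by
      intro t ht
      rw [Finset.mem_biUnion] at ht
      obtain ⟨x, _, hxt⟩ := ht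
      rw [hedef, Finset.mem_powersetCard] at hxt
      rw [Finset.mem_powersetCard]
      exact ⟨hxt.1.trans (Finset.filter_subset _ _), hxt.2⟩
    calc (S.biUnion e).card ≤ (M.powersetCard 2).card := Finset.card_le_card hsub
    _ = 10 := by rw [Finset.card_powersetCard, hMcard]; rfl
  -- lower bounds
  have hep : (e p).card = 3 := by
    have hdp := hd p
    rw [← mult_eq, hp3] at hdp
    have hLsp : (Ls.filter fun X => p ≤ X).card = 0 := by
      rw [Finset.card_eq_zero, Finset.filter_eq_empty_iff]
      intro X hX
      obtain ⟨i, rfl⟩ := (hLs_mem X).1 hX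
      exact hcon i
    have hM3 : (M.filter fun X => p ≤ X).card = 3 := by omega
    rw [hedef, Finset.card_powersetCard, hM3]; rfl
  have heS0 : ∀ x ∈ S0, 1 ≤ (e x).card := by
    intro x hx
    rw [hS0def, Finset.mem_biUnion] at hx
    obtain ⟨i, _, hxi⟩ := hx
    obtain ⟨hxpt, hxm, _, hxQ⟩ := hT2 i x hxi
    have hdx := hd x
    rw [← mult_eq] at hdx
    have hLsx := hLsfilter x hxpt hxQ
    have h2 : 2 ≤ (M.filter fun X => x ≤ X).card := by omega
    rw [hedef, Finset.card_powersetCard]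
    exact Nat.choose_pos h2
  have hlb : 11 ≤ ∑ x ∈ S, (e x).card := by
    rw [hSdef, Finset.sum_insert hpS0, hep]
    have : 8 ≤ ∑ x ∈ S0, (e x).card := by
      calc (8 : ℕ) ≤ S0.card := hS0card
      _ = ∑ _x ∈ S0, 1 := by simp
      _ ≤ ∑ x ∈ S0, (e x).card := Finset.sum_le_sum heS0
    omega
  omega
end

section
/- Let 𝒜 be an arrangement of 9 pairwise distinct lines in ℂℙ² all of whose multiple points are triple points. If 𝒜 is not simple C≤3 and no eight lines of 𝒜 form a MacLane arrangement, then 𝒜 has at most 10 triple points (equivalently, 𝒜 has at least 4 double points). -/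
/-- An arrangement is *simple C≤3* if there are three lines L₁, L₂, L₃ of the
arrangement covering all multiple points (points of multiplicity ≥ 3), and
moreover either L₁ ∩ L₂ ∩ L₃ ≠ ∅, or one of L₁, L₂, L₃ contains at most one
multiple point apart from the pairwise intersection points L₁ ∩ L₂, L₂ ∩ L₃,
L₁ ∩ L₃. -/
def SimpleCle3 (A : Finset (Submodule ℂ V3)) : Prop :=
  ∃ L1 L2 L3, L1 ∈ A ∧ L2 ∈ A ∧ L3 ∈ A ∧
    (∀ p, IsPoint p → 3 ≤ mult A p → p ≤ L1 ∨ p ≤ L2 ∨ p ≤ L3) ∧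
    ((∃ p, IsPoint p ∧ p ≤ L1 ∧ p ≤ L2 ∧ p ≤ L3) ∨
      {p | IsPoint p ∧ 3 ≤ mult A p ∧ p ≤ L1 ∧ ¬ p ≤ L2 ∧ ¬ p ≤ L3}.ncard ≤ 1 ∨
      {p | IsPoint p ∧ 3 ≤ mult A p ∧ p ≤ L2 ∧ ¬ p ≤ L1 ∧ ¬ p ≤ L3}.ncard ≤ 1 ∨
      {p | IsPoint p ∧ 3 ≤ mult A p ∧ p ≤ L3 ∧ ¬ p ≤ L1 ∧ ¬ p ≤ L2}.ncard ≤ 1)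

/-- A MacLane arrangement: eight pairwise distinct lines in ℂℙ² with exactly eight
triple points, no point of multiplicity ≥ 4, and each line passing through exactly
three triple points. -/
def IsMacLane (B : Finset (Submodule ℂ V3)) : Prop :=
  B.card = 8 ∧ (∀ L ∈ B, IsLine L) ∧
  (∀ p, IsPoint p → mult B p ≤ 3) ∧
  nPts B 3 = 8 ∧
  ∀ L ∈ B, {p | IsPoint p ∧ mult B p = 3 ∧ p ≤ L}.ncard = 3

/-- an arrangement of 9 pairwise distinct lines in ℂℙ² all of whose
multiple points are triple points, which is not simple C≤3 and no eight of whose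
lines form a MacLane arrangement, has at most 10 triple points, equivalently at
least 4 double points. -/
lemma finrank_V3 : Module.finrank ℂ V3 = 3 := Module.finrank_fin_fun ℂ

lemma inter_isPoint {L M : Submodule ℂ V3} (hL : IsLine L) (hM : IsLine M) (hne : L ≠ M) :
    IsPoint (L ⊓ M) := by
  have h1 : Module.finrank ℂ ↥(L ⊔ M) + Module.finrank ℂ ↥(L ⊓ M) =
      Module.finrank ℂ L + Module.finrank ℂ M := Submodule.finrank_sup_add_finrank_inf_eq L M
  have h2 : Module.finrank ℂ ↥(L ⊔ M) ≤ 3 := by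
    have := Submodule.finrank_le (L ⊔ M)
    rwa [finrank_V3] at this
  have h3 : Module.finrank ℂ ↥(L ⊓ M) ≤ 2 := by
    have := Submodule.finrank_mono (inf_le_left : L ⊓ M ≤ L)
    rwa [hL] at this
  have h4 : Module.finrank ℂ ↥(L ⊓ M) ≠ 2 := by
    intro h
    have : L ⊓ M = L := Submodule.eq_of_le_of_finrank_eq inf_le_left (by rw [h, hL])
    have hLM : L ≤ M := by rw [← this]; exact inf_le_right
    exact hne (Submodule.eq_of_le_of_finrank_eq hLM (by rw [hL, hM]))
  rw [hL, hM] at h1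
  unfold IsPoint
  omega

lemma point_eq_inf {p L M : Submodule ℂ V3} (hp : IsPoint p) (hL : IsLine L) (hM : IsLine M)
    (hne : L ≠ M) (h1 : p ≤ L) (h2 : p ≤ M) : p = L ⊓ M := by
  have := inter_isPoint hL hM hne
  exact Submodule.eq_of_le_of_finrank_eq (le_inf h1 h2) (by rw [hp, this])


theorem at_most_ten_triple_points (A : Finset (Submodule ℂ V3))
    (hcard : A.card = 9) (hlines : ∀ L ∈ A, IsLine L)
    (htriple : ∀ p, IsPoint p → mult A p ≤ 3)
    (hns : ¬ SimpleCle3 A)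
    (hml : ∀ B ⊆ A, ¬ IsMacLane B) :
    nPts A 3 ≤ 10 ∧ 4 ≤ nPts A 2 := by
  classical
  -- multiplicities via filters
  have hmultgen : ∀ (C : Finset (Submodule ℂ V3)) (p : Submodule ℂ V3),
      mult C p = (C.filter (fun L => p ≤ L)).card := by
    intro C p
    rw [mult, ← Set.ncard_coe_finset]
    congr 1
    ext L
    simp [Finset.mem_filter]
  have huniq : ∀ {p L M : Submodule ℂ V3}, IsPoint p → L ∈ A → M ∈ A → L ≠ M →
      p ≤ L → p ≤ M → p = L ⊓ M := fun hp h1 h2 h3 h4 h5 =>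
    point_eq_inf hp (hlines _ h1) (hlines _ h2) h3 h4 h5
  set g : Submodule ℂ V3 × Submodule ℂ V3 → Submodule ℂ V3 := fun x => x.1 ⊓ x.2 with hg
  set I : Finset (Submodule ℂ V3) := A.offDiag.image g with hIdef
  have hIpt : ∀ p ∈ I, IsPoint p := by
    intro p hp
    obtain ⟨x, hx, rfl⟩ := Finset.mem_image.mp hp
    obtain ⟨h1, h2, h3⟩ := Finset.mem_offDiag.mp hx
    exact inter_isPoint (hlines _ h1) (hlines _ h2) h3
  have hinfI : ∀ L ∈ A, ∀ M ∈ A, L ≠ M → L ⊓ M ∈ I := by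
    intro L hL M hM hne
    exact Finset.mem_image.mpr ⟨(L, M), Finset.mem_offDiag.mpr ⟨hL, hM, hne⟩, rfl⟩
  have hmem_I : ∀ {p : Submodule ℂ V3}, IsPoint p → 2 ≤ mult A p → p ∈ I := by
    intro p hp h2
    rw [hmultgen] at h2
    obtain ⟨L, M, hL, hM, hne⟩ := Finset.one_lt_card_iff.mp h2
    rw [Finset.mem_filter] at hL hM
    have := huniq hp hL.1 hM.1 hne hL.2 hM.2
    rw [this]
    exact hinfI L hL.1 M hM.1 hne
  have hmultI : ∀ p ∈ I, mult A p = 2 ∨ mult A p = 3 := by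
    intro p hp
    have h3 := htriple p (hIpt p hp)
    obtain ⟨x, hx, rfl⟩ := Finset.mem_image.mp hp
    obtain ⟨h1, h2, hne⟩ := Finset.mem_offDiag.mp hx
    have h2' : 2 ≤ mult A (g x) := by
      rw [hmultgen]
      refine Finset.one_lt_card_iff.mpr ⟨x.1, x.2, ?_, ?_, hne⟩ <;> rw [Finset.mem_filter]
      · exact ⟨h1, inf_le_left⟩
      · exact ⟨h2, inf_le_right⟩
    omega
  set N2 : Finset (Submodule ℂ V3) := I.filter (fun p => mult A p = 2) with hN2def
  set N3 : Finset (Submodule ℂ V3) := I.filter (fun p => mult A p = 3) with hN3def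
  have hN2mem : ∀ p : Submodule ℂ V3, p ∈ N2 ↔ (IsPoint p ∧ mult A p = 2) := by
    intro p
    rw [hN2def, Finset.mem_filter]
    constructor
    · rintro ⟨h1, h2⟩; exact ⟨hIpt p h1, h2⟩
    · rintro ⟨h1, h2⟩; exact ⟨hmem_I h1 (by omega), h2⟩
  have hN3mem : ∀ p : Submodule ℂ V3, p ∈ N3 ↔ (IsPoint p ∧ mult A p = 3) := by
    intro p
    rw [hN3def, Finset.mem_filter]
    constructor
    · rintro ⟨h1, h2⟩; exact ⟨hIpt p h1, h2⟩
    · rintro ⟨h1, h2⟩; exact ⟨hmem_I h1 (by omega), h2⟩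
  have hN3I : N3 ⊆ I := Finset.filter_subset _ _
  -- global count : 2*n2 + 6*n3 = 72
  have hfiber : ∀ p ∈ I, A.offDiag.filter (fun x => g x = p) =
      (A.filter (fun L => p ≤ L)).offDiag := by
    intro p hp
    ext x
    simp only [Finset.mem_filter, Finset.mem_offDiag]
    constructor
    · rintro ⟨⟨h1, h2, hne⟩, rfl⟩
      exact ⟨⟨h1, inf_le_left⟩, ⟨h2, inf_le_right⟩, hne⟩
    · rintro ⟨⟨h1, hp1⟩, ⟨h2, hp2⟩, hne⟩
      exact ⟨⟨h1, h2, hne⟩, (huniq (hIpt p hp) h1 h2 hne hp1 hp2).symm⟩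
  have hcount : ∑ p ∈ I, (mult A p * mult A p - mult A p) = 72 := by
    have h1 := Finset.card_eq_sum_card_image g A.offDiag
    rw [Finset.offDiag_card, hcard, ← hIdef] at h1
    have h2 : ∑ p ∈ I, (A.offDiag.filter (fun x => g x = p)).card
        = ∑ p ∈ I, (mult A p * mult A p - mult A p) :=
      Finset.sum_congr rfl (fun p hp => by
        rw [hfiber p hp, Finset.offDiag_card, hmultgen A p])
    rw [h2] at h1
    omega
  have hsplit : 2 * N2.card + 6 * N3.card = 72 := by
    rw [← hcount, ← Finset.sum_filter_add_sum_filter_not I (fun p => mult A p = 2)]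
    have e0 : I.filter (fun p => ¬ mult A p = 2) = N3 := by
      ext p
      simp only [Finset.mem_filter, hN3def]
      constructor
      · rintro ⟨h1, h2⟩
        rcases hmultI p h1 with h | h
        · exact absurd h h2
        · exact ⟨h1, h⟩
      · rintro ⟨h1, h2⟩
        exact ⟨h1, by omega⟩
    rw [e0]
    rw [Finset.sum_congr rfl (fun p hp => show mult A p * mult A p - mult A p = 2 by
      rw [((hN2mem p).mp hp).2])]
    rw [Finset.sum_congr (rfl : N3 = N3) (fun p hp => show mult A p * mult A p - mult A p = 6 by
      rw [((hN3mem p).mp hp).2])]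
    rw [Finset.sum_const, Finset.sum_const, smul_eq_mul, smul_eq_mul]
    ring
  -- per line count : 2*t3 + t2 = 8
  have hline8 : ∀ L ∈ A, 2 * (N3.filter (fun p => p ≤ L)).card
      + (N2.filter (fun p => p ≤ L)).card = 8 := by
    intro L hL
    have himg : (A.erase L).image (fun M => L ⊓ M) = I.filter (fun p => p ≤ L) := by
      ext p
      simp only [Finset.mem_image, Finset.mem_filter, Finset.mem_erase]
      constructor
      · rintro ⟨M, ⟨hne, hM⟩, rfl⟩
        exact ⟨hinfI L hL M hM (Ne.symm hne), inf_le_left⟩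
      · rintro ⟨hpI, hpL⟩
        have h2 : 1 < (A.filter (fun K => p ≤ K)).card := by
          rw [← hmultgen]
          rcases hmultI p hpI with h | h <;> omega
        obtain ⟨M, hM, hMne⟩ := Finset.exists_mem_ne h2 L
        rw [Finset.mem_filter] at hM
        exact ⟨M, ⟨hMne, hM.1⟩, (huniq (hIpt p hpI) hL hM.1 (Ne.symm hMne) hpL hM.2).symm⟩
    have hfib : ∀ p ∈ I.filter (fun p => p ≤ L),
        ((A.erase L).filter (fun M => L ⊓ M = p)).card = mult A p - 1 := by
      intro p hp
      rw [Finset.mem_filter] at hp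
      have he : (A.erase L).filter (fun M => L ⊓ M = p) = (A.filter (fun K => p ≤ K)).erase L := by
        ext M
        simp only [Finset.mem_filter, Finset.mem_erase]
        constructor
        · rintro ⟨⟨hne, hM⟩, rfl⟩
          exact ⟨hne, hM, inf_le_right⟩
        · rintro ⟨hne, hM, hpM⟩
          exact ⟨⟨hne, hM⟩, (huniq (hIpt p hp.1) hL hM (Ne.symm hne) hp.2 hpM).symm⟩
      rw [he, Finset.card_erase_of_mem (Finset.mem_filter.mpr ⟨hL, hp.2⟩), ← hmultgen]
    have h1 := Finset.card_eq_sum_card_image (fun M => L ⊓ M) (A.erase L)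
    rw [Finset.card_erase_of_mem hL, hcard, himg, Finset.sum_congr rfl hfib] at h1
    rw [← Finset.sum_filter_add_sum_filter_not (I.filter (fun p => p ≤ L))
      (fun p => mult A p = 2)] at h1
    have e2 : (I.filter (fun p => p ≤ L)).filter (fun p => mult A p = 2)
        = N2.filter (fun p => p ≤ L) := by
      ext p
      simp only [Finset.mem_filter, hN2def]
      tauto
    have e3 : (I.filter (fun p => p ≤ L)).filter (fun p => ¬ mult A p = 2)
        = N3.filter (fun p => p ≤ L) := by
      ext p
      simp only [Finset.mem_filter, hN3def]
      constructor
      · rintro ⟨⟨h1, h2⟩, h3⟩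
        rcases hmultI p h1 with h | h
        · exact absurd h h3
        · exact ⟨⟨h1, h⟩, h2⟩
      · rintro ⟨⟨h1, h2⟩, h3⟩
        exact ⟨⟨h1, h3⟩, by omega⟩
    rw [e2, e3] at h1
    rw [Finset.sum_congr rfl (fun p hp => show mult A p - 1 = 1 by
      have := (hN2mem p).mp (Finset.mem_filter.mp hp).1; omega)] at h1
    rw [Finset.sum_congr (rfl : N3.filter (fun p => p ≤ L) = _) (fun p hp =>
      show mult A p - 1 = 2 by
      have := (hN3mem p).mp (Finset.mem_filter.mp hp).1; omega)] at h1
    rw [Finset.sum_const, Finset.sum_const, smul_eq_mul, smul_eq_mul] at h1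
    omega
  -- double counting of incidences
  have hsum2 : ∑ L ∈ A, (N2.filter (fun p => p ≤ L)).card = 2 * N2.card := by
    rw [Finset.sum_congr rfl (fun L _ => Finset.card_filter _ _), Finset.sum_comm]
    rw [Finset.sum_congr rfl (fun p hp => show (∑ L ∈ A, if p ≤ L then 1 else 0) = 2 by
      rw [← Finset.card_filter, ← hmultgen]
      exact ((hN2mem p).mp hp).2)]
    rw [Finset.sum_const, smul_eq_mul]
    ring
  -- common points of two lines in N3
  have hcomcard : ∀ L ∈ A, ∀ M ∈ A, L ≠ M →
      (N3.filter (fun p => p ≤ M ∧ ¬ p ≤ L)).card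
        = (N3.filter (fun p => p ≤ M)).card - (if L ⊓ M ∈ N3 then 1 else 0) ∧
      (if L ⊓ M ∈ N3 then 1 else 0) ≤ (N3.filter (fun p => p ≤ M)).card := by
    intro L hL M hM hne
    have hsub : ∀ p ∈ N3.filter (fun p => p ≤ M ∧ p ≤ L), p = L ⊓ M := by
      intro p hp
      rw [Finset.mem_filter] at hp
      exact huniq (hIpt p (hN3I hp.1)) hL hM hne hp.2.2 hp.2.1
    have hpos : (N3.filter (fun p => p ≤ M ∧ p ≤ L)).card = (if L ⊓ M ∈ N3 then 1 else 0) := by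
      by_cases hc : L ⊓ M ∈ N3
      · rw [if_pos hc]
        have : N3.filter (fun p => p ≤ M ∧ p ≤ L) = {L ⊓ M} := by
          apply Finset.Subset.antisymm
          · intro p hp
            rw [Finset.mem_singleton]
            exact hsub p hp
          · intro p hp
            rw [Finset.mem_singleton] at hp
            subst hp
            exact Finset.mem_filter.mpr ⟨hc, inf_le_right, inf_le_left⟩
        rw [this, Finset.card_singleton]
      · rw [if_neg hc, Finset.card_eq_zero, Finset.filter_eq_empty_iff]
        intro p hp hcond
        have := hsub p (Finset.mem_filter.mpr ⟨hp, hcond⟩)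
        subst this
        exact hc hp
    have htot : (N3.filter (fun p => p ≤ M ∧ p ≤ L)).card
        + (N3.filter (fun p => p ≤ M ∧ ¬ p ≤ L)).card = (N3.filter (fun p => p ≤ M)).card := by
      have h := Finset.card_filter_add_card_filter_not
        (s := N3.filter (fun p => p ≤ M)) (p := fun p => p ≤ L)
      have e1 : (N3.filter (fun p => p ≤ M)).filter (fun p => p ≤ L)
          = N3.filter (fun p => p ≤ M ∧ p ≤ L) := by
        ext q; simp only [Finset.mem_filter]; tauto
      have e2 : (N3.filter (fun p => p ≤ M)).filter (fun p => ¬ p ≤ L)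
          = N3.filter (fun p => p ≤ M ∧ ¬ p ≤ L) := by
        ext q; simp only [Finset.mem_filter]; tauto
      rw [e1, e2] at h
      exact h
    omega
  -- the main dichotomy
  have hnPts3 : nPts A 3 = N3.card := by
    rw [nPts, ← Set.ncard_coe_finset]
    congr 1
    ext p
    simp only [Set.mem_setOf_eq, Finset.mem_coe]
    exact (hN3mem p).symm
  have hnPts2 : nPts A 2 = N2.card := by
    rw [nPts, ← Set.ncard_coe_finset]
    congr 1
    ext p
    simp only [Set.mem_setOf_eq, Finset.mem_coe]
    exact (hN2mem p).symm
  rw [hnPts3, hnPts2]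
  suffices hle : N3.card ≤ 10 by omega
  by_contra hgt
  push_neg at hgt
  -- key : a line whose removal gives a MacLane arrangement
  have key : ∃ L0 ∈ A, (N3.filter (fun p => ¬ p ≤ L0)).card = 8 ∧
      ∀ M ∈ A, M ≠ L0 → (N3.filter (fun p => p ≤ M ∧ ¬ p ≤ L0)).card = 3 := by
    have hneg : ∀ L : Submodule ℂ V3, (N3.filter (fun p => p ≤ L)).card
        + (N3.filter (fun p => ¬ p ≤ L)).card = N3.card :=
      fun L => Finset.card_filter_add_card_filter_not (p := fun p => p ≤ L)
    have hN2I : N2 ⊆ I := Finset.filter_subset _ _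
    have h1112 : N3.card = 11 ∨ N3.card = 12 := by omega
    rcases h1112 with h11 | h12
    · -- eleven triple points, three double points
      have hn2 : N2.card = 3 := by omega
      have ht2le : ∀ L : Submodule ℂ V3, (N2.filter (fun p => p ≤ L)).card ≤ 3 := by
        intro L
        calc (N2.filter (fun p => p ≤ L)).card ≤ N2.card :=
              Finset.card_le_card (Finset.filter_subset _ _)
          _ = 3 := hn2
      have ht2even : ∀ L ∈ A, (N2.filter (fun p => p ≤ L)).card = 0
          ∨ (N2.filter (fun p => p ≤ L)).card = 2 := by
        intro L hL
        have h1 := hline8 L hL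
        have h2 := ht2le L
        omega
      have ht2pos : ∀ L ∈ A, ∀ p ∈ N2, p ≤ L → (N2.filter (fun q => q ≤ L)).card = 2 := by
        intro L hL p hp hpL
        have h1 : 0 < (N2.filter (fun q => q ≤ L)).card :=
          Finset.card_pos.mpr ⟨p, Finset.mem_filter.mpr ⟨hp, hpL⟩⟩
        rcases ht2even L hL with h | h <;> omega
      obtain ⟨p0, hp0⟩ : ∃ p, p ∈ N2 := Finset.card_pos.mp (by omega)
      have hthru2 : ∀ p ∈ N2, ∃ L M, L ∈ A ∧ M ∈ A ∧ L ≠ M ∧ p ≤ L ∧ p ≤ M ∧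
          ∀ K ∈ A, p ≤ K → K = L ∨ K = M := by
        intro p hp
        obtain ⟨hppt, hpm⟩ := (hN2mem p).mp hp
        have hc : (A.filter (fun K => p ≤ K)).card = 2 := by rw [← hmultgen]; exact hpm
        obtain ⟨L, M, hLM, hset⟩ := Finset.card_eq_two.mp hc
        have hLmem : L ∈ A.filter (fun K => p ≤ K) := by rw [hset]; simp
        have hMmem : M ∈ A.filter (fun K => p ≤ K) := by rw [hset]; simp
        refine ⟨L, M, (Finset.mem_filter.mp hLmem).1, (Finset.mem_filter.mp hMmem).1, hLM,
          (Finset.mem_filter.mp hLmem).2, (Finset.mem_filter.mp hMmem).2, ?_⟩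
        intro K hK hpK
        have : K ∈ A.filter (fun K => p ≤ K) := Finset.mem_filter.mpr ⟨hK, hpK⟩
        rw [hset] at this
        simpa using this
      obtain ⟨L0, M0, hL0, hM0, hne0, hp0L0, hp0M0, -⟩ := hthru2 p0 hp0
      have hpartner : ∀ p ∈ N2, p ≤ L0 → ∃ M ∈ A, M ≠ L0 ∧ p ≤ M := by
        intro p hp hpL0
        obtain ⟨L, M, hL, hM, hne, hpL, hpM, hall⟩ := hthru2 p hp
        rcases hall L0 hL0 hpL0 with rfl | rfl
        · exact ⟨M, hM, Ne.symm hne, hpM⟩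
        · exact ⟨L, hL, hne, hpL⟩
      have ht2L0 : (N2.filter (fun q => q ≤ L0)).card = 2 := ht2pos L0 hL0 p0 hp0 hp0L0
      obtain ⟨p, q, hpq, hpqset⟩ := Finset.card_eq_two.mp ht2L0
      have hpmem : p ∈ N2 ∧ p ≤ L0 :=
        Finset.mem_filter.mp (by rw [hpqset]; simp : p ∈ N2.filter (fun q => q ≤ L0))
      have hqmem : q ∈ N2 ∧ q ≤ L0 :=
        Finset.mem_filter.mp (by rw [hpqset]; simp : q ∈ N2.filter (fun q => q ≤ L0))
      have hppt : IsPoint p := ((hN2mem p).mp hpmem.1).1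
      have hqpt : IsPoint q := ((hN2mem q).mp hqmem.1).1
      obtain ⟨P1, hP1A, hP1ne, hpP1⟩ := hpartner p hpmem.1 hpmem.2
      obtain ⟨Q1, hQ1A, hQ1ne, hqQ1⟩ := hpartner q hqmem.1 hqmem.2
      have hPQ : P1 ≠ Q1 := by
        intro h
        subst h
        have e1 : p = L0 ⊓ P1 := huniq hppt hL0 hP1A (Ne.symm hP1ne) hpmem.2 hpP1
        have e2 : q = L0 ⊓ P1 := huniq hqpt hL0 hP1A (Ne.symm hP1ne) hqmem.2 hqQ1
        exact hpq (e1.trans e2.symm)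
      have ht2P1 : (N2.filter (fun r => r ≤ P1)).card = 2 := ht2pos P1 hP1A p hpmem.1 hpP1
      have ht2Q1 : (N2.filter (fun r => r ≤ Q1)).card = 2 := ht2pos Q1 hQ1A q hqmem.1 hqQ1
      have hout : ∀ M ∈ A, M ≠ L0 → M ≠ P1 → M ≠ Q1 →
          (N2.filter (fun r => r ≤ M)).card = 0 := by
        intro M hMA h1 h2 h3
        by_contra hc
        have hM2 : (N2.filter (fun r => r ≤ M)).card = 2 := by
          rcases ht2even M hMA with h | h <;> omega
        have hsubA : ({M, L0, P1, Q1} : Finset (Submodule ℂ V3)) ⊆ A := by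
          intro x hx
          simp only [Finset.mem_insert, Finset.mem_singleton] at hx
          rcases hx with rfl | rfl | rfl | rfl
          exacts [hMA, hL0, hP1A, hQ1A]
        have hsum : ∑ L ∈ ({M, L0, P1, Q1} : Finset (Submodule ℂ V3)),
            (N2.filter (fun r => r ≤ L)).card ≤ 6 := by
          calc _ ≤ ∑ L ∈ A, (N2.filter (fun r => r ≤ L)).card :=
                Finset.sum_le_sum_of_subset hsubA
            _ = 2 * N2.card := hsum2
            _ = 6 := by rw [hn2]
        rw [Finset.sum_insert (by
            simp only [Finset.mem_insert, Finset.mem_singleton]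
            push_neg
            exact ⟨h1, h2, h3⟩),
          Finset.sum_insert (by
            simp only [Finset.mem_insert, Finset.mem_singleton]
            push_neg
            exact ⟨Ne.symm hP1ne, Ne.symm hQ1ne⟩),
          Finset.sum_insert (by simp only [Finset.mem_singleton]; exact hPQ),
          Finset.sum_singleton] at hsum
        omega
      refine ⟨L0, hL0, ?_, ?_⟩
      · have h1 := hline8 L0 hL0
        have h2 := hneg L0
        omega
      · intro M hMA hMne
        obtain ⟨hc1, hc2⟩ := hcomcard L0 hL0 M hMA (Ne.symm hMne)
        by_cases hMP : M = P1
        · subst hMP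
          have hnotin : L0 ⊓ M ∉ N3 := by
            intro hin
            have e1 : p = L0 ⊓ M := huniq hppt hL0 hMA (Ne.symm hMne) hpmem.2 hpP1
            have h3 := ((hN3mem _).mp hin).2
            have h2 := ((hN2mem p).mp hpmem.1).2
            rw [← e1] at h3
            omega
          rw [if_neg hnotin] at hc1
          have h1 := hline8 M hMA
          rw [ht2P1] at h1
          omega
        · by_cases hMQ : M = Q1
          · subst hMQ
            have hnotin : L0 ⊓ M ∉ N3 := by
              intro hin
              have e1 : q = L0 ⊓ M := huniq hqpt hL0 hMA (Ne.symm hMne) hqmem.2 hqQ1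
              have h3 := ((hN3mem _).mp hin).2
              have h2 := ((hN2mem q).mp hqmem.1).2
              rw [← e1] at h3
              omega
            rw [if_neg hnotin] at hc1
            have h1 := hline8 M hMA
            rw [ht2Q1] at h1
            omega
          · have ht2M : (N2.filter (fun r => r ≤ M)).card = 0 := hout M hMA hMne hMP hMQ
            have hin : L0 ⊓ M ∈ N3 := by
              have hI0 : L0 ⊓ M ∈ I := hinfI L0 hL0 M hMA (Ne.symm hMne)
              rcases hmultI _ hI0 with h | h
              · exfalso
                have hmem2 : L0 ⊓ M ∈ N2 := (hN2mem _).mpr ⟨hIpt _ hI0, h⟩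
                have : L0 ⊓ M ∈ N2.filter (fun r => r ≤ M) :=
                  Finset.mem_filter.mpr ⟨hmem2, inf_le_right⟩
                have := Finset.card_pos.mpr ⟨L0 ⊓ M, this⟩
                omega
              · exact (hN3mem _).mpr ⟨hIpt _ hI0, h⟩
            rw [if_pos hin] at hc1 hc2
            have h1 := hline8 M hMA
            rw [ht2M] at h1
            omega
    · -- twelve triple points, no double points
      have hn2 : N2.card = 0 := by omega
      have hN2e : N2 = ∅ := Finset.card_eq_zero.mp hn2
      have ht2z : ∀ L : Submodule ℂ V3, (N2.filter (fun p => p ≤ L)).card = 0 := by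
        intro L
        rw [hN2e, Finset.filter_empty, Finset.card_empty]
      obtain ⟨L0, hL0⟩ : ∃ L, L ∈ A := Finset.card_pos.mp (by omega)
      refine ⟨L0, hL0, ?_, ?_⟩
      · have h1 := hline8 L0 hL0
        have h2 := hneg L0
        have h3 := ht2z L0
        omega
      · intro M hMA hMne
        obtain ⟨hc1, hc2⟩ := hcomcard L0 hL0 M hMA (Ne.symm hMne)
        have hin : L0 ⊓ M ∈ N3 := by
          have hI0 : L0 ⊓ M ∈ I := hinfI L0 hL0 M hMA (Ne.symm hMne)
          rcases hmultI _ hI0 with h | h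
          · exfalso
            have : L0 ⊓ M ∈ N2 := (hN2mem _).mpr ⟨hIpt _ hI0, h⟩
            rw [hN2e] at this
            exact absurd this (Finset.notMem_empty _)
          · exact (hN3mem _).mpr ⟨hIpt _ hI0, h⟩
        rw [if_pos hin] at hc1 hc2
        have h1 := hline8 M hMA
        have h2 := ht2z M
        omega
  obtain ⟨L0, hL0A, ht8, hkey⟩ := key
  refine hml (A.erase L0) (Finset.erase_subset _ _) ?_
  have hmultB : ∀ p : Submodule ℂ V3,
      mult (A.erase L0) p = (if p ≤ L0 then mult A p - 1 else mult A p) := by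
    intro p
    rw [hmultgen, hmultgen]
    have he : (A.erase L0).filter (fun L => p ≤ L) = (A.filter (fun L => p ≤ L)).erase L0 := by
      ext M
      simp only [Finset.mem_filter, Finset.mem_erase]
      tauto
    rw [he]
    by_cases hp : p ≤ L0
    · rw [if_pos hp, Finset.card_erase_of_mem (Finset.mem_filter.mpr ⟨hL0A, hp⟩)]
    · rw [if_neg hp, Finset.erase_eq_of_notMem (fun hc => hp (Finset.mem_filter.mp hc).2)]
  have hmultB3 : ∀ p : Submodule ℂ V3, IsPoint p →
      (mult (A.erase L0) p = 3 ↔ (mult A p = 3 ∧ ¬ p ≤ L0)) := by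
    intro p hp
    have h3 := htriple p hp
    rw [hmultB]
    by_cases hp0 : p ≤ L0
    · rw [if_pos hp0]
      constructor
      · intro h; omega
      · rintro ⟨_, hc⟩; exact absurd hp0 hc
    · rw [if_neg hp0]
      tauto
  refine ⟨?_, ?_, ?_, ?_, ?_⟩
  · rw [Finset.card_erase_of_mem hL0A, hcard]
  · exact fun L hL => hlines L (Finset.mem_of_mem_erase hL)
  · intro p hp
    rw [hmultB]
    have := htriple p hp
    split <;> omega
  · have hset : {p | IsPoint p ∧ mult (A.erase L0) p = 3}
        = ↑(N3.filter (fun p => ¬ p ≤ L0)) := by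
      ext p
      simp only [Set.mem_setOf_eq, Finset.coe_filter, Finset.mem_coe, Set.mem_setOf_eq]
      constructor
      · rintro ⟨h1, h2⟩
        rw [hmultB3 p h1] at h2
        exact ⟨(hN3mem p).mpr ⟨h1, h2.1⟩, h2.2⟩
      · rintro ⟨h1, h2⟩
        obtain ⟨hp1, hp2⟩ := (hN3mem p).mp h1
        exact ⟨hp1, (hmultB3 p hp1).mpr ⟨hp2, h2⟩⟩
    rw [nPts, hset, Set.ncard_coe_finset]
    exact ht8
  · intro M hM
    obtain ⟨hMne, hMA⟩ := Finset.mem_erase.mp hM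
    have hset : {p | IsPoint p ∧ mult (A.erase L0) p = 3 ∧ p ≤ M}
        = ↑(N3.filter (fun p => p ≤ M ∧ ¬ p ≤ L0)) := by
      ext p
      simp only [Set.mem_setOf_eq, Finset.coe_filter, Finset.mem_coe, Set.mem_setOf_eq]
      constructor
      · rintro ⟨h1, h2, h3⟩
        rw [hmultB3 p h1] at h2
        exact ⟨(hN3mem p).mpr ⟨h1, h2.1⟩, h3, h2.2⟩
      · rintro ⟨h1, h2, h3⟩
        obtain ⟨hp1, hp2⟩ := (hN3mem p).mp h1
        exact ⟨hp1, (hmultB3 p hp1).mpr ⟨hp2, h3⟩, h2⟩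
    rw [hset, Set.ncard_coe_finset]
    exact hkey M hMA hMne
end

section
/- Let 𝒜 be an arrangement of 9 pairwise distinct lines in ℂℙ² all of whose multiple points are triple points, having exactly 10 triple points, and such that each line of 𝒜 passes through at least three triple points. Then exactly three lines of 𝒜 pass through exactly four triple points each, and the remaining six lines pass through exactly three triple points each. -/
open Module in
/-- Two distinct points and two distinct lines cannot be mutually incident. -/
lemma aux_no_two (p q L M : Submodule ℂ V3) (hp : IsPoint p) (hq : IsPoint q)
    (hL : IsLine L) (hM : IsLine M) (hpq : p ≠ q) (hLM : L ≠ M)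
    (hpL : p ≤ L) (hqL : q ≤ L) (hpM : p ≤ M) (hqM : q ≤ M) : False := by
  have hinf : finrank ℂ (p ⊓ q : Submodule ℂ V3) = 0 := by
    by_contra h
    have h1 : finrank ℂ (p ⊓ q : Submodule ℂ V3) ≤ 1 := hp ▸ Submodule.finrank_mono inf_le_left
    have h2 : finrank ℂ (p ⊓ q : Submodule ℂ V3) = 1 := by omega
    have := Submodule.eq_of_le_of_finrank_eq (inf_le_left (a := p) (b := q)) (h2.trans hp.symm)
    exact hpq (Submodule.eq_of_le_of_finrank_eq (this ▸ inf_le_right) (hp.trans hq.symm))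
  have hsup : finrank ℂ (p ⊔ q : Submodule ℂ V3) = 2 := by
    have := Submodule.finrank_sup_add_finrank_inf_eq p q
    rw [hinf, hp, hq] at this; omega
  have hLMinf : finrank ℂ (L ⊓ M : Submodule ℂ V3) ≤ 1 := by
    by_contra h
    have h1 : finrank ℂ (L ⊓ M : Submodule ℂ V3) ≤ 2 := hL ▸ Submodule.finrank_mono inf_le_left
    have h2 : finrank ℂ (L ⊓ M : Submodule ℂ V3) = 2 := by omega
    have e1 := Submodule.eq_of_le_of_finrank_eq (inf_le_left (a := L) (b := M)) (h2.trans hL.symm)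
    have e2 := Submodule.eq_of_le_of_finrank_eq (inf_le_right (a := L) (b := M)) (h2.trans hM.symm)
    exact hLM (e1.symm.trans e2)
  have hle : p ⊔ q ≤ L ⊓ M := sup_le (le_inf hpL hpM) (le_inf hqL hqM)
  have := Submodule.finrank_mono hle
  omega

/-- let 𝒜 be an arrangement of 9 pairwise distinct lines in ℂℙ² all of
whose multiple points are triple points, with exactly 10 triple points, each line
passing through at least three triple points. Then exactly three lines contain
exactly four triple points each, and the remaining six lines contain exactly three
triple points each. -/
theorem three_lines_with_four_triples (A : Finset (Submodule ℂ V3))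
    (hcard : A.card = 9) (hlines : ∀ L ∈ A, IsLine L)
    (htriple : ∀ p, IsPoint p → mult A p ≤ 3)
    (h10 : nPts A 3 = 10)
    (h3 : ∀ L ∈ A, 3 ≤ {p | IsPoint p ∧ mult A p = 3 ∧ p ≤ L}.ncard) :
    {L | L ∈ A ∧ {p | IsPoint p ∧ mult A p = 3 ∧ p ≤ L}.ncard = 4}.ncard = 3 ∧
    {L | L ∈ A ∧ {p | IsPoint p ∧ mult A p = 3 ∧ p ≤ L}.ncard = 3}.ncard = 6 := by
  classical
  -- the set of triple points is finite with 10 elements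
  have hfin : {p : Submodule ℂ V3 | IsPoint p ∧ mult A p = 3}.Finite := by
    by_contra h
    rw [nPts, Set.Infinite.ncard h] at h10
    exact absurd h10 (by norm_num)
  set T : Finset (Submodule ℂ V3) := hfin.toFinset with hT
  have hTmem : ∀ p, p ∈ T ↔ IsPoint p ∧ mult A p = 3 := fun p => hfin.mem_toFinset
  have hTcard : T.card = 10 := by
    rw [← h10, nPts, ← Set.ncard_coe_finset, hT, hfin.coe_toFinset]
  -- multiplicity as a finset card
  have hmult : ∀ p : Submodule ℂ V3, mult A p = (A.filter (fun L => p ≤ L)).card := by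
    intro p
    rw [mult, ← Set.ncard_coe_finset]
    congr 1
    ext L; simp [Finset.mem_filter]
  -- the set of triple points on a line as a finset
  have hSL : ∀ L : Submodule ℂ V3,
      {p | IsPoint p ∧ mult A p = 3 ∧ p ≤ L} = ↑(T.filter (fun p => p ≤ L)) := by
    intro L
    ext p
    simp only [Set.mem_setOf_eq, Finset.coe_filter, hTmem]
    tauto
  set t : Submodule ℂ V3 → ℕ := fun L => (T.filter (fun p => p ≤ L)).card with ht
  have hSLn : ∀ L : Submodule ℂ V3,
      {p | IsPoint p ∧ mult A p = 3 ∧ p ≤ L}.ncard = t L := by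
    intro L; rw [hSL, Set.ncard_coe_finset]
  -- double counting: total incidences = 30
  have hsum : ∑ L ∈ A, t L = 30 := by
    have : ∑ L ∈ A, t L = ∑ p ∈ T, (A.filter (fun L => p ≤ L)).card := by
      simp only [ht, Finset.card_filter]
      rw [Finset.sum_comm]
    rw [this]
    have : ∀ p ∈ T, (A.filter (fun L => p ≤ L)).card = 3 := by
      intro p hp
      rw [← hmult]; exact ((hTmem p).1 hp).2
    rw [Finset.sum_congr rfl this, Finset.sum_const, hTcard, smul_eq_mul]
  -- upper bound: each line contains at most 4 triple points
  have hub : ∀ L ∈ A, t L ≤ 4 := by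
    intro L hL
    set S := T.filter (fun p => p ≤ L) with hS
    set g : Submodule ℂ V3 → Finset (Submodule ℂ V3) :=
      fun p => (A.erase L).filter (fun M => p ≤ M) with hg
    have hgcard : ∀ p ∈ S, (g p).card = 2 := by
      intro p hp
      rw [Finset.mem_filter] at hp
      obtain ⟨hpT, hpL⟩ := hp
      obtain ⟨hpt, hm3⟩ := (hTmem p).1 hpT
      rw [hg]
      simp only [Finset.filter_erase]
      rw [Finset.card_erase_of_mem (by simp [Finset.mem_filter, hL, hpL]), ← hmult, hm3]
    have hdisj : ∀ p ∈ S, ∀ q ∈ S, p ≠ q → Disjoint (g p) (g q) := by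
      intro p hp q hq hpq
      rw [Finset.disjoint_left]
      intro M hMp hMq
      rw [hg] at hMp hMq
      simp only [Finset.mem_filter, Finset.mem_erase] at hMp hMq
      rw [hS, Finset.mem_filter] at hp hq
      exact aux_no_two p q L M ((hTmem p).1 hp.1).1 ((hTmem q).1 hq.1).1
        (hlines L hL) (hlines M (hMp.1.2)) hpq (Ne.symm hMp.1.1)
        hp.2 hq.2 hMp.2 hMq.2
    have hsub : S.biUnion g ⊆ A.erase L := by
      intro M hM
      rw [Finset.mem_biUnion] at hM
      obtain ⟨p, _, hMp⟩ := hM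
      exact (Finset.mem_filter.1 hMp).1
    have h1 : (S.biUnion g).card = ∑ p ∈ S, (g p).card := Finset.card_biUnion hdisj
    have h2 : ∑ p ∈ S, (g p).card = 2 * S.card := by
      rw [Finset.sum_congr rfl hgcard, Finset.sum_const, smul_eq_mul, mul_comm]
    have h3 : (S.biUnion g).card ≤ (A.erase L).card := Finset.card_le_card hsub
    have h4 : (A.erase L).card = 8 := by rw [Finset.card_erase_of_mem hL, hcard]
    have : t L = S.card := rfl
    omega
  -- lower bound from hypothesis
  have hlb : ∀ L ∈ A, 3 ≤ t L := by
    intro L hL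
    rw [← hSLn]; exact h3 L hL
  -- arithmetic: let B be the lines with exactly 4 triple points
  set B := A.filter (fun L => t L = 4) with hB
  have hBsub : B ⊆ A := Finset.filter_subset _ _
  have hcompl : A.filter (fun L => t L = 3) = A \ B := by
    ext L
    simp only [hB, Finset.mem_filter, Finset.mem_sdiff]
    constructor
    · rintro ⟨hLA, h⟩; exact ⟨hLA, fun h' => by omega⟩
    · rintro ⟨hLA, h⟩
      have h4 := hub L hLA
      have h3' := hlb L hLA
      refine ⟨hLA, ?_⟩
      by_contra hne
      exact h ⟨hLA, by omega⟩
  have hsplit : ∑ L ∈ A, t L = ∑ L ∈ B, t L + ∑ L ∈ A \ B, t L :=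
    (Finset.sum_sdiff hBsub).symm.trans (by ring)
  have hB4 : ∑ L ∈ B, t L = 4 * B.card := by
    rw [Finset.sum_congr rfl (fun L hL => (Finset.mem_filter.1 hL).2), Finset.sum_const,
      smul_eq_mul, mul_comm]
  have hA3 : ∑ L ∈ A \ B, t L = 3 * (A \ B).card := by
    have heach : ∀ L ∈ A \ B, t L = 3 := by
      intro L hL
      rw [Finset.mem_sdiff] at hL
      have h4 := hub L hL.1
      have h3' := hlb L hL.1
      have : ¬ t L = 4 := fun h => hL.2 (Finset.mem_filter.2 ⟨hL.1, h⟩)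
      omega
    rw [Finset.sum_congr rfl heach, Finset.sum_const, smul_eq_mul, mul_comm]
  have hsd : (A \ B).card = A.card - B.card := Finset.card_sdiff_of_subset hBsub
  have hBle : B.card ≤ A.card := Finset.card_le_card hBsub
  have hBcard : B.card = 3 := by
    rw [hsplit, hB4, hA3, hsd, hcard] at hsum
    omega
  -- convert goals
  have goal1 : {L | L ∈ A ∧ {p | IsPoint p ∧ mult A p = 3 ∧ p ≤ L}.ncard = 4} = ↑B := by
    ext L
    simp only [Set.mem_setOf_eq, hB, Finset.coe_filter, hSLn]
  have goal2 : {L | L ∈ A ∧ {p | IsPoint p ∧ mult A p = 3 ∧ p ≤ L}.ncard = 3}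
      = ↑(A \ B) := by
    rw [← hcompl]
    ext L
    simp only [Set.mem_setOf_eq, Finset.coe_filter, hSLn]
  constructor
  · rw [goal1, Set.ncard_coe_finset, hBcard]
  · rw [goal2, Set.ncard_coe_finset, hsd, hcard, hBcard]
end

section
/- Let 𝒜 be an arrangement of 9 pairwise distinct lines in ℂℙ² all of whose multiple points are triple points, having exactly 10 triple points, and such that each line of 𝒜 passes through at least three triple points. If the three lines of 𝒜 that each contain four triple points pass through a common point, then all ten triple points of 𝒜 lie on the union of these three lines. -/
/-- Two distinct lines meet in at most one point. -/
lemma point_unique {L M p q : Submodule ℂ V3} (hL : IsLine L) (hM : IsLine M)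
    (hLM : L ≠ M) (hp : IsPoint p) (hq : IsPoint q)
    (hpL : p ≤ L) (hpM : p ≤ M) (hqL : q ≤ L) (hqM : q ≤ M) : p = q := by
  have hV : Module.finrank ℂ V3 = 3 := by
    simpa using Module.finrank_fin_fun (n := 3) ℂ
  have hsup_le : Module.finrank ℂ ↥(L ⊔ M) ≤ 3 := by
    have h := Submodule.finrank_le (L ⊔ M)
    omega
  have hlt : L < L ⊔ M := by
    rcases lt_or_eq_of_le (le_sup_left : L ≤ L ⊔ M) with h | h
    · exact h
    · exfalso
      have hML : M ≤ L := by rw [h]; exact le_sup_right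
      exact hLM (Submodule.eq_of_le_of_finrank_eq hML (by rw [hM, hL])).symm
  have hsup_ge : 2 < Module.finrank ℂ ↥(L ⊔ M) := by
    have h := Submodule.finrank_lt_finrank_of_lt hlt
    have hL' : Module.finrank ℂ ↥L = 2 := hL
    omega
  have hsup : Module.finrank ℂ ↥(L ⊔ M) = 3 := le_antisymm hsup_le hsup_ge
  have hkey := Submodule.finrank_sup_add_finrank_inf_eq L M
  rw [hsup, hL, hM] at hkey
  have hinf : Module.finrank ℂ ↥(L ⊓ M) = 1 := by omega
  have hpinf : p = L ⊓ M :=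
    Submodule.eq_of_le_of_finrank_eq (le_inf hpL hpM) (by rw [hp, hinf])
  have hqinf : q = L ⊓ M :=
    Submodule.eq_of_le_of_finrank_eq (le_inf hqL hqM) (by rw [hq, hinf])
  rw [hpinf, hqinf]

/-- let 𝒜 be an arrangement of 9 pairwise distinct lines in ℂℙ² all of
whose multiple points are triple points, with exactly 10 triple points, each line
passing through at least three triple points. If the three lines of 𝒜 containing
four triple points each pass through a common point, then all ten triple points lie
on the union of these three lines. -/
theorem concurrent_four_triple_lines (A : Finset (Submodule ℂ V3))
    (hcard : A.card = 9) (hlines : ∀ L ∈ A, IsLine L)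
    (htriple : ∀ p, IsPoint p → mult A p ≤ 3)
    (h10 : nPts A 3 = 10)
    (h3 : ∀ L ∈ A, 3 ≤ {p | IsPoint p ∧ mult A p = 3 ∧ p ≤ L}.ncard)
    (L1 L2 L3 : Submodule ℂ V3) (h1 : L1 ∈ A) (h2 : L2 ∈ A) (h3' : L3 ∈ A)
    (hne12 : L1 ≠ L2) (hne13 : L1 ≠ L3) (hne23 : L2 ≠ L3)
    (hc1 : {p | IsPoint p ∧ mult A p = 3 ∧ p ≤ L1}.ncard = 4)
    (hc2 : {p | IsPoint p ∧ mult A p = 3 ∧ p ≤ L2}.ncard = 4)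
    (hc3 : {p | IsPoint p ∧ mult A p = 3 ∧ p ≤ L3}.ncard = 4)
    (P : Submodule ℂ V3) (hP : IsPoint P) (hP1 : P ≤ L1) (hP2 : P ≤ L2) (hP3 : P ≤ L3) :
    ∀ p, IsPoint p → mult A p = 3 → p ≤ L1 ∨ p ≤ L2 ∨ p ≤ L3 := by
  -- the set of triple points
  set T : Set (Submodule ℂ V3) := {q | IsPoint q ∧ mult A q = 3} with hTdef
  have hL1 := hlines L1 h1
  have hL2 := hlines L2 h2
  have hL3 := hlines L3 h3'
  unfold nPts at h10
  have hT10 : T.ncard = 10 := h10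
  have hTfin : T.Finite := by
    by_contra h
    rw [Set.Infinite.ncard h] at hT10
    exact absurd hT10 (by norm_num)
  -- P is a triple point
  have hmultP : mult A P = 3 := by
    refine le_antisymm (htriple P hP) ?_
    have hsub : ({L1, L2, L3} : Set (Submodule ℂ V3)) ⊆ {L | L ∈ A ∧ P ≤ L} := by
      intro L hL
      rcases hL with rfl | rfl | rfl
      · exact ⟨h1, hP1⟩
      · exact ⟨h2, hP2⟩
      · exact ⟨h3', hP3⟩
    have hfin : {L | L ∈ A ∧ P ≤ L}.Finite :=
      A.finite_toSet.subset fun x hx => hx.1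
    have hcard3 : ({L1, L2, L3} : Set (Submodule ℂ V3)).ncard = 3 := by
      rw [Set.ncard_insert_of_notMem (by simp [hne12, hne13]),
        Set.ncard_insert_of_notMem (by simp [hne23]), Set.ncard_singleton]
    calc (3 : ℕ) = ({L1, L2, L3} : Set (Submodule ℂ V3)).ncard := hcard3.symm
      _ ≤ _ := Set.ncard_le_ncard hsub hfin
  have hPT : P ∈ T := ⟨hP, hmultP⟩
  -- the triple points on each line
  set S1 : Set (Submodule ℂ V3) := {q | IsPoint q ∧ mult A q = 3 ∧ q ≤ L1} with hS1def
  set S2 : Set (Submodule ℂ V3) := {q | IsPoint q ∧ mult A q = 3 ∧ q ≤ L2} with hS2def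
  set S3 : Set (Submodule ℂ V3) := {q | IsPoint q ∧ mult A q = 3 ∧ q ≤ L3} with hS3def
  have hS1T : S1 ⊆ T := fun q hq => ⟨hq.1, hq.2.1⟩
  have hS2T : S2 ⊆ T := fun q hq => ⟨hq.1, hq.2.1⟩
  have hS3T : S3 ⊆ T := fun q hq => ⟨hq.1, hq.2.1⟩
  have hS1fin : S1.Finite := hTfin.subset hS1T
  have hS2fin : S2.Finite := hTfin.subset hS2T
  have hS3fin : S3.Finite := hTfin.subset hS3T
  have hPS1 : P ∈ S1 := ⟨hP, hmultP, hP1⟩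
  have hPS2 : P ∈ S2 := ⟨hP, hmultP, hP2⟩
  have hPS3 : P ∈ S3 := ⟨hP, hmultP, hP3⟩
  -- the punctured sets
  have hc1' : (S1 \ {P}).ncard = 3 := by
    rw [Set.ncard_diff_singleton_of_mem hPS1, hc1]
  have hc2' : (S2 \ {P}).ncard = 3 := by
    rw [Set.ncard_diff_singleton_of_mem hPS2, hc2]
  have hc3' : (S3 \ {P}).ncard = 3 := by
    rw [Set.ncard_diff_singleton_of_mem hPS3, hc3]
  -- disjointness
  have hd12 : Disjoint (S1 \ {P}) (S2 \ {P}) := by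
    rw [Set.disjoint_left]
    rintro q ⟨hq1, hqP⟩ ⟨hq2, -⟩
    exact hqP (point_unique hL1 hL2 hne12 hq1.1 hP hq1.2.2 hq2.2.2 hP1 hP2)
  have hd13 : Disjoint (S1 \ {P}) (S3 \ {P}) := by
    rw [Set.disjoint_left]
    rintro q ⟨hq1, hqP⟩ ⟨hq3, -⟩
    exact hqP (point_unique hL1 hL3 hne13 hq1.1 hP hq1.2.2 hq3.2.2 hP1 hP3)
  have hd23 : Disjoint (S2 \ {P}) (S3 \ {P}) := by
    rw [Set.disjoint_left]
    rintro q ⟨hq2, hqP⟩ ⟨hq3, -⟩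
    exact hqP (point_unique hL2 hL3 hne23 hq2.1 hP hq2.2.2 hq3.2.2 hP2 hP3)
  have hdP : Disjoint ({P} : Set (Submodule ℂ V3)) ((S1 \ {P}) ∪ (S2 \ {P}) ∪ (S3 \ {P})) := by
    rw [Set.disjoint_left]
    rintro q rfl hq
    rcases hq with (⟨-, h⟩ | ⟨-, h⟩) | ⟨-, h⟩ <;> exact h rfl
  -- the union has 10 elements
  set U : Set (Submodule ℂ V3) := {P} ∪ ((S1 \ {P}) ∪ (S2 \ {P}) ∪ (S3 \ {P})) with hUdef
  have hU10 : U.ncard = 10 := by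
    rw [hUdef, Set.ncard_union_eq hdP (Set.finite_singleton P)
      (((hS1fin.diff).union (hS2fin.diff)).union (hS3fin.diff)),
      Set.ncard_union_eq (by exact Disjoint.union_left hd13 hd23)
        ((hS1fin.diff).union (hS2fin.diff)) (hS3fin.diff),
      Set.ncard_union_eq hd12 (hS1fin.diff) (hS2fin.diff),
      Set.ncard_singleton, hc1', hc2', hc3']
  have hUT : U ⊆ T := by
    rintro q (rfl | (hq | hq) | hq)
    · exact hPT
    · exact hS1T hq.1
    · exact hS2T hq.1
    · exact hS3T hq.1
  have hUeq : U = T := Set.eq_of_subset_of_ncard_le hUT (by omega) hTfin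
  -- conclude
  intro p hp hmp
  have hpT : p ∈ T := ⟨hp, hmp⟩
  rw [← hUeq] at hpT
  rcases hpT with rfl | (hq | hq) | hq
  · exact Or.inl hP1
  · exact Or.inl hq.1.2.2
  · exact Or.inr (Or.inl hq.1.2.2)
  · exact Or.inr (Or.inr hq.1.2.2)
end

section
/- Let i = √−1 ∈ ℂ and let 𝒜^{+i} be the arrangement of the nine lines in ℂℙ² defined by the vanishing of the linear forms x, y, x−z, y−z, x−iz, y−iz, x−y, (i−1)x+iy+z, and (1−i)x+y−z. Then these nine lines are pairwise distinct; no point of ℂℙ² lies on four or more of the lines; exactly ten points lie on exactly three of the lines; exactly three of the nine lines contain four of these triple points each, and these three lines have no common point; and each of the remaining six lines contains exactly three of the triple points. -/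
/-- The line of ℂℙ² (2-dimensional subspace of ℂ³) with equation a·x + b·y + c·z = 0,
i.e. the kernel of the linear form (x, y, z) ↦ a·x + b·y + c·z. -/
noncomputable def lineOf (a b c : ℂ) : Submodule ℂ V3 :=
  LinearMap.ker
    (a • LinearMap.proj 0 + b • LinearMap.proj 1 + c • LinearMap.proj 2 : V3 →ₗ[ℂ] ℂ)
/-- The nine lines of the arrangement 𝒜^{+i}: the zero loci of
x, y, x−z, y−z, x−iz, y−iz, x−y, (i−1)x+iy+z, (1−i)x+y−z. -/
noncomputable def ALines : Fin 9 → Submodule ℂ V3 :=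
  ![lineOf 1 0 0, lineOf 0 1 0, lineOf 1 0 (-1), lineOf 0 1 (-1),
    lineOf 1 0 (-Complex.I), lineOf 0 1 (-Complex.I), lineOf 1 (-1) 0,
    lineOf (Complex.I - 1) Complex.I 1, lineOf (1 - Complex.I) 1 (-1)]

open scoped Classical in
/-- The arrangement 𝒜^{+i} as a finite set of lines. -/
noncomputable def AiA : Finset (Submodule ℂ V3) := Finset.image ALines Finset.univ

/- ==================== generic machinery ==================== -/

lemma mem_lineOf {a b c : ℂ} {v : V3} :
    v ∈ lineOf a b c ↔ a * v 0 + b * v 1 + c * v 2 = 0 := by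
  simp [lineOf, LinearMap.mem_ker, LinearMap.add_apply, LinearMap.smul_apply,
    LinearMap.proj_apply, smul_eq_mul]

lemma point_gen {q : Submodule ℂ V3} (hq : IsPoint q) :
    ∃ u : V3, u ≠ 0 ∧ q = Submodule.span ℂ {u} := by
  have hnt : Nontrivial q := Module.nontrivial_of_finrank_pos (R := ℂ) (by rw [hq]; norm_num)
  obtain ⟨u, hu, hune⟩ := exists_mem_ne_zero_of_rank_pos (s := q) rank_pos
  refine ⟨u, hune, ?_⟩
  have hle : Submodule.span ℂ {u} ≤ q := by rwa [Submodule.span_singleton_le_iff_mem]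
  exact (Submodule.eq_of_le_of_finrank_eq hle
    (by rw [finrank_span_singleton hune, hq])).symm

lemma aux_scale {u w : V3} (hu : u ≠ 0) (k : Fin 3) (hk : w k ≠ 0)
    (hc : ∀ m, u m * w k = u k * w m) : ∃ d : ℂ, d ≠ 0 ∧ u = d • w := by
  have huk : u k ≠ 0 := by
    intro h
    apply hu
    funext m
    have hm := hc m
    rw [h, zero_mul] at hm
    exact (mul_eq_zero.mp hm).resolve_right hk
  refine ⟨u k / w k, div_ne_zero huk hk, ?_⟩
  funext m
  have hm := hc m
  simp only [Pi.smul_apply, smul_eq_mul]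
  field_simp
  linear_combination hm

lemma span_eq_of_cross {u w : V3} (hu : u ≠ 0) (hw : w ≠ 0)
    (h01 : u 0 * w 1 = u 1 * w 0) (h02 : u 0 * w 2 = u 2 * w 0)
    (h12 : u 1 * w 2 = u 2 * w 1) :
    Submodule.span ℂ {u} = Submodule.span ℂ {w} := by
  obtain ⟨k, hk⟩ := Function.ne_iff.mp hw
  have hk : w k ≠ 0 := by simpa using hk
  have hc : ∀ m, u m * w k = u k * w m := by
    fin_cases k <;> intro m <;> fin_cases m <;> norm_num <;>
      first
        | exact h01
        | exact h01.symm
        | exact h02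
        | exact h02.symm
        | exact h12
        | exact h12.symm
  obtain ⟨d, hd, rfl⟩ := aux_scale hu k hk hc
  exact Submodule.span_singleton_smul_eq (IsUnit.mk0 d hd) w

lemma point_eq_span (a b c a' b' c' : ℂ) {q : Submodule ℂ V3} (hq : IsPoint q)
    (h1 : q ≤ lineOf a b c) (h2 : q ≤ lineOf a' b' c')
    {w : V3} (hw0 : w 0 = b * c' - c * b') (hw1 : w 1 = c * a' - a * c')
    (hw2 : w 2 = a * b' - b * a') (hwne : w ≠ 0) :
    q = Submodule.span ℂ {w} := by
  obtain ⟨u, hune, rfl⟩ := point_gen hq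
  rw [Submodule.span_singleton_le_iff_mem, mem_lineOf] at h1 h2
  apply span_eq_of_cross hune hwne
  · rw [hw0, hw1]; linear_combination c * h2 - c' * h1
  · rw [hw0, hw2]; linear_combination b' * h1 - b * h2
  · rw [hw1, hw2]; linear_combination a * h2 - a' * h1

/- ==================== concrete data ==================== -/

noncomputable def coef : Fin 9 → Fin 3 → ℂ :=
  ![![1, 0, 0], ![0, 1, 0], ![1, 0, -1], ![0, 1, -1], ![1, 0, -Complex.I], ![0, 1, -Complex.I], ![1, -1, 0], ![Complex.I - 1, Complex.I, 1], ![1 - Complex.I, 1, -1]]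

noncomputable def xp (i j : Fin 9) : V3 :=
  ![coef i 1 * coef j 2 - coef i 2 * coef j 1,
    coef i 2 * coef j 0 - coef i 0 * coef j 2,
    coef i 0 * coef j 1 - coef i 1 * coef j 0]

noncomputable def Pt : Fin 16 → V3 :=
  ![![0, 0, 1], ![0, 1, 0], ![0, 1, 1], ![0, 1, -Complex.I], ![1, 0, 0], ![1, 0, 1 - Complex.I], ![1, 1, 1], ![1, Complex.I, 1], ![1, -Complex.I, -Complex.I], ![1, 1, -Complex.I], ![1, 0, 1], ![1, 0, -Complex.I], ![1, -1, 1], ![1, -1, -Complex.I], ![1, 1, 1 - 2 * Complex.I], ![1, 1, 2 - Complex.I]]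

def inc : Fin 16 → Fin 9 → Bool :=
  ![
    ![true, true, false, false, false, false, true, false, false],
    ![true, false, true, false, true, false, false, false, false],
    ![true, false, false, true, false, false, false, false, true],
    ![true, false, false, false, false, true, false, true, false],
    ![false, true, false, true, false, true, false, false, false],
    ![false, true, false, false, false, false, false, true, true],
    ![false, false, true, true, false, false, true, false, false],
    ![false, false, true, false, false, true, false, false, true],
    ![false, false, false, true, true, false, false, true, false],
    ![false, false, false, false, true, true, true, false, false],
    ![false, true, true, false, false, false, false, false, false],
    ![false, true, false, false, true, false, false, false, false],
    ![false, false, true, false, false, false, false, true, false],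
    ![false, false, false, false, true, false, false, false, true],
    ![false, false, false, false, false, false, true, true, false],
    ![false, false, false, false, false, false, true, false, true]]

def multTab (p : Fin 16) : ℕ := (Finset.univ.filter (fun i => inc p i = true)).card

def tTab (i : Fin 9) : ℕ :=
  (Finset.univ.filter (fun p => multTab p = 3 ∧ inc p i = true)).card

lemma AL0 : ALines 0 = lineOf 1 0 0 := rfl
lemma AL1 : ALines 1 = lineOf 0 1 0 := rfl
lemma AL2 : ALines 2 = lineOf 1 0 (-1) := rfl
lemma AL3 : ALines 3 = lineOf 0 1 (-1) := rfl
lemma AL4 : ALines 4 = lineOf 1 0 (-Complex.I) := rfl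
lemma AL5 : ALines 5 = lineOf 0 1 (-Complex.I) := rfl
lemma AL6 : ALines 6 = lineOf 1 (-1) 0 := rfl
lemma AL7 : ALines 7 = lineOf (Complex.I - 1) Complex.I 1 := rfl
lemma AL8 : ALines 8 = lineOf (1 - Complex.I) 1 (-1) := rfl
lemma C0 : coef 0 = (![1, 0, 0] : Fin 3 → ℂ) := rfl
lemma C1 : coef 1 = (![0, 1, 0] : Fin 3 → ℂ) := rfl
lemma C2 : coef 2 = (![1, 0, -1] : Fin 3 → ℂ) := rfl
lemma C3 : coef 3 = (![0, 1, -1] : Fin 3 → ℂ) := rfl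
lemma C4 : coef 4 = (![1, 0, -Complex.I] : Fin 3 → ℂ) := rfl
lemma C5 : coef 5 = (![0, 1, -Complex.I] : Fin 3 → ℂ) := rfl
lemma C6 : coef 6 = (![1, -1, 0] : Fin 3 → ℂ) := rfl
lemma C7 : coef 7 = (![Complex.I - 1, Complex.I, 1] : Fin 3 → ℂ) := rfl
lemma C8 : coef 8 = (![1 - Complex.I, 1, -1] : Fin 3 → ℂ) := rfl
lemma P0 : Pt 0 = (![0, 0, 1] : V3) := rfl
lemma P1 : Pt 1 = (![0, 1, 0] : V3) := rfl
lemma P2 : Pt 2 = (![0, 1, 1] : V3) := rfl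
lemma P3 : Pt 3 = (![0, 1, -Complex.I] : V3) := rfl
lemma P4 : Pt 4 = (![1, 0, 0] : V3) := rfl
lemma P5 : Pt 5 = (![1, 0, 1 - Complex.I] : V3) := rfl
lemma P6 : Pt 6 = (![1, 1, 1] : V3) := rfl
lemma P7 : Pt 7 = (![1, Complex.I, 1] : V3) := rfl
lemma P8 : Pt 8 = (![1, -Complex.I, -Complex.I] : V3) := rfl
lemma P9 : Pt 9 = (![1, 1, -Complex.I] : V3) := rfl
lemma P10 : Pt 10 = (![1, 0, 1] : V3) := rfl
lemma P11 : Pt 11 = (![1, 0, -Complex.I] : V3) := rfl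
lemma P12 : Pt 12 = (![1, -1, 1] : V3) := rfl
lemma P13 : Pt 13 = (![1, -1, -Complex.I] : V3) := rfl
lemma P14 : Pt 14 = (![1, 1, 1 - 2 * Complex.I] : V3) := rfl
lemma P15 : Pt 15 = (![1, 1, 2 - Complex.I] : V3) := rfl

lemma ALines_eq (i : Fin 9) : ALines i = lineOf (coef i 0) (coef i 1) (coef i 2) := by
  fin_cases i <;> rfl

/- ==================== numeric facts ==================== -/

lemma K1 : ∀ (p : Fin 16) (k : Fin 9), Pt p ∈ ALines k ↔ inc p k = true := by
  intro p k
  fin_cases p <;> fin_cases k <;>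
    simp [AL0, AL1, AL2, AL3, AL4, AL5, AL6, AL7, AL8, P0, P1, P2, P3, P4, P5, P6, P7, P8, P9, P10, P11, P12, P13, P14, P15, mem_lineOf] <;>
    norm_num [Complex.ext_iff] <;> decide

lemma Pt_ne_zero : ∀ p : Fin 16, Pt p ≠ 0 := by
  intro p
  fin_cases p <;>
    simp [P0, P1, P2, P3, P4, P5, P6, P7, P8, P9, P10, P11, P12, P13, P14, P15, Matrix.cons_eq_zero_iff] <;>
    norm_num [Complex.ext_iff]

lemma K2 : ∀ i j : Fin 9, i ≠ j → xp i j ≠ 0 := by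
  intro i j hij
  fin_cases i <;> fin_cases j <;>
    first
      | exact absurd rfl hij
      | (simp [xp, C0, C1, C2, C3, C4, C5, C6, C7, C8, Matrix.cons_eq_zero_iff] <;> norm_num [Complex.ext_iff])

/- ==================== structural lemmas ==================== -/

lemma ALines_inj : Function.Injective ALines := by
  have hd : ∀ i j : Fin 9, i ≠ j → ∃ p : Fin 16, inc p i = true ∧ inc p j = false := by decide
  intro i j hij
  by_contra hne
  obtain ⟨p, hpi, hpj⟩ := hd i j hne
  have h := (K1 p i).mpr hpi
  rw [hij] at h
  have := (K1 p j).mp h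
  rw [hpj] at this
  exact Bool.false_ne_true this

lemma point_on_two {q : Submodule ℂ V3} (hq : IsPoint q) {i j : Fin 9} (hij : i ≠ j)
    (hi : q ≤ ALines i) (hj : q ≤ ALines j) : q = Submodule.span ℂ {xp i j} := by
  rw [ALines_eq] at hi hj
  exact point_eq_span _ _ _ _ _ _ hq hi hj (by simp [xp]) (by simp [xp]) (by simp [xp])
    (K2 i j hij)

lemma spanPt_isPoint (p : Fin 16) : IsPoint (Submodule.span ℂ {Pt p}) :=
  finrank_span_singleton (Pt_ne_zero p)

lemma spanPt_le (p : Fin 16) (k : Fin 9) :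
    Submodule.span ℂ {Pt p} ≤ ALines k ↔ inc p k = true := by
  rw [Submodule.span_singleton_le_iff_mem]; exact K1 p k

lemma two_lines_span {q : Submodule ℂ V3} (hq : IsPoint q) {i j : Fin 9} (hij : i ≠ j)
    (hi : q ≤ ALines i) (hj : q ≤ ALines j) :
    ∃ p : Fin 16, q = Submodule.span ℂ {Pt p} ∧ inc p i = true ∧ inc p j = true := by
  have hd : ∀ i j : Fin 9, i ≠ j → ∃ p : Fin 16, inc p i = true ∧ inc p j = true := by decide
  obtain ⟨p, hpi, hpj⟩ := hd i j hij
  refine ⟨p, ?_, hpi, hpj⟩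
  have h1 := point_on_two hq hij hi hj
  have h2 := point_on_two (spanPt_isPoint p) hij ((spanPt_le p i).mpr hpi)
    ((spanPt_le p j).mpr hpj)
  rw [h1, ← h2]

lemma spanPt_inj : Function.Injective (fun p : Fin 16 => Submodule.span ℂ {Pt p}) := by
  have hd : ∀ p p' : Fin 16, (∀ k, inc p k = inc p' k) → p = p' := by decide
  intro p p' h
  apply hd
  intro k
  have h1 : (inc p k = true) ↔ (inc p' k = true) := by
    rw [← spanPt_le, ← spanPt_le]
    simp only at h
    rw [h]
  cases hb : inc p k <;> cases hb' : inc p' k <;> simp_all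

open scoped Classical in
lemma mult_eq_s11 (q : Submodule ℂ V3) :
    mult AiA q = (Finset.univ.filter (fun i => q ≤ ALines i)).card := by
  have hs : {L | L ∈ AiA ∧ q ≤ L} = ALines '' {i | q ≤ ALines i} := by
    ext L
    simp only [Set.mem_setOf_eq, Set.mem_image, AiA, Finset.mem_image, Finset.mem_univ,
      true_and]
    constructor
    · rintro ⟨⟨i, rfl⟩, hL⟩; exact ⟨i, hL, rfl⟩
    · rintro ⟨i, hi, rfl⟩; exact ⟨⟨i, rfl⟩, hi⟩
  rw [mult, hs, Set.ncard_image_of_injective _ ALines_inj,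
    show {i | q ≤ ALines i} = ↑(Finset.univ.filter (fun i => q ≤ ALines i)) from by
      ext i; simp]
  exact Set.ncard_coe_finset _

open scoped Classical in
lemma mult_spanPt (p : Fin 16) : mult AiA (Submodule.span ℂ {Pt p}) = multTab p := by
  rw [mult_eq_s11, multTab]
  congr 1
  ext i
  simp only [Finset.mem_filter, Finset.mem_univ, true_and]
  exact spanPt_le p i

lemma mult_big {q : Submodule ℂ V3} (hq : IsPoint q) (h : 2 ≤ mult AiA q) :
    ∃ p : Fin 16, q = Submodule.span ℂ {Pt p} := by
  classical
  rw [mult_eq_s11] at h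
  obtain ⟨i, hi, j, hj, hij⟩ := Finset.one_lt_card.mp h
  simp only [Finset.mem_filter, Finset.mem_univ, true_and] at hi hj
  obtain ⟨p, hp, -, -⟩ := two_lines_span hq hij hi hj
  exact ⟨p, hp⟩

lemma triple_line_set (i : Fin 9) :
    {q | IsPoint q ∧ mult AiA q = 3 ∧ q ≤ ALines i}
      = (fun p : Fin 16 => Submodule.span ℂ {Pt p}) ''
          {p : Fin 16 | multTab p = 3 ∧ inc p i = true} := by
  ext q
  simp only [Set.mem_setOf_eq, Set.mem_image]
  constructor
  · rintro ⟨hq, h3, hle⟩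
    obtain ⟨p, rfl⟩ := mult_big hq (by omega)
    exact ⟨p, ⟨by rw [← mult_spanPt p]; exact h3, (spanPt_le p i).mp hle⟩, rfl⟩
  · rintro ⟨p, ⟨h3, hinc⟩, rfl⟩
    exact ⟨spanPt_isPoint p, by rw [mult_spanPt p]; exact h3, (spanPt_le p i).mpr hinc⟩

open scoped Classical in
lemma tcount (i : Fin 9) :
    {q | IsPoint q ∧ mult AiA q = 3 ∧ q ≤ ALines i}.ncard = tTab i := by
  rw [triple_line_set, Set.ncard_image_of_injective _ spanPt_inj,
    show {p : Fin 16 | multTab p = 3 ∧ inc p i = true}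
        = ↑(Finset.univ.filter (fun p : Fin 16 => multTab p = 3 ∧ inc p i = true)) from by
      ext p; simp, Set.ncard_coe_finset]
  rw [tTab]

lemma mem_AiA {L : Submodule ℂ V3} : L ∈ AiA ↔ ∃ i, ALines i = L := by
  simp only [AiA, Finset.mem_image, Finset.mem_univ, true_and]

lemma rich_set (n : ℕ) :
    {L | L ∈ AiA ∧ {q | IsPoint q ∧ mult AiA q = 3 ∧ q ≤ L}.ncard = n}
      = ALines '' {i | tTab i = n} := by
  ext L
  simp only [Set.mem_setOf_eq, Set.mem_image, mem_AiA]
  constructor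
  · rintro ⟨⟨i, rfl⟩, hn⟩; exact ⟨i, by rw [← tcount]; exact hn, rfl⟩
  · rintro ⟨i, hi, rfl⟩; exact ⟨⟨i, rfl⟩, by rw [tcount]; exact hi⟩

open scoped Classical in
lemma rich_card (n : ℕ) :
    {L | L ∈ AiA ∧ {q | IsPoint q ∧ mult AiA q = 3 ∧ q ≤ L}.ncard = n}.ncard
      = (Finset.univ.filter (fun i : Fin 9 => tTab i = n)).card := by
  rw [rich_set, Set.ncard_image_of_injective _ ALines_inj,
    show {i : Fin 9 | tTab i = n}
        = ↑(Finset.univ.filter (fun i : Fin 9 => tTab i = n)) from by ext i; simp,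
    Set.ncard_coe_finset]

lemma ALines_mem_AiA (i : Fin 9) : ALines i ∈ AiA := by
  simp only [AiA, Finset.mem_image, Finset.mem_univ, true_and]
  exact ⟨i, rfl⟩

/- ==================== the theorem ==================== -/

/-- the nine lines of 𝒜^{+i} are pairwise distinct; no point lies on
four or more of them; there are exactly ten triple points; exactly three of the
lines contain four triple points each and these three lines have no common point;
and each of the remaining six lines contains exactly three triple points. -/
theorem A_plus_i_lattice :
    Function.Injective ALines ∧
    (∀ p, IsPoint p → mult AiA p ≤ 3) ∧
    nPts AiA 3 = 10 ∧
    {L | L ∈ AiA ∧ {p | IsPoint p ∧ mult AiA p = 3 ∧ p ≤ L}.ncard = 4}.ncard = 3 ∧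
    (¬ ∃ q, IsPoint q ∧ ∀ L, L ∈ AiA →
        {p | IsPoint p ∧ mult AiA p = 3 ∧ p ≤ L}.ncard = 4 → q ≤ L) ∧
    {L | L ∈ AiA ∧ {p | IsPoint p ∧ mult AiA p = 3 ∧ p ≤ L}.ncard = 3}.ncard = 6 := by
  classical
  refine ⟨ALines_inj, ?_, ?_, ?_, ?_, ?_⟩
  · -- multiplicity at most 3
    intro q hq
    by_cases h2 : 2 ≤ mult AiA q
    · obtain ⟨p, rfl⟩ := mult_big hq h2
      rw [mult_spanPt p]
      have : ∀ p : Fin 16, multTab p ≤ 3 := by decide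
      exact this p
    · omega
  · -- ten triple points
    have hset : {q | IsPoint q ∧ mult AiA q = 3}
        = (fun p : Fin 16 => Submodule.span ℂ {Pt p}) ''
            {p : Fin 16 | multTab p = 3} := by
      ext q
      simp only [Set.mem_setOf_eq, Set.mem_image]
      constructor
      · rintro ⟨hq, h3⟩
        obtain ⟨p, rfl⟩ := mult_big hq (by omega)
        exact ⟨p, by rw [← mult_spanPt p]; exact h3, rfl⟩
      · rintro ⟨p, hp, rfl⟩
        exact ⟨spanPt_isPoint p, by rw [mult_spanPt p]; exact hp⟩
    rw [nPts, hset, Set.ncard_image_of_injective _ spanPt_inj,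
      show {p : Fin 16 | multTab p = 3}
          = ↑(Finset.univ.filter (fun p : Fin 16 => multTab p = 3)) from by ext p; simp,
      Set.ncard_coe_finset]
    decide
  · -- three 4-rich lines
    rw [rich_card 4]
    decide
  · -- the 4-rich lines have no common point
    rintro ⟨q, hq, hall⟩
    have ht : tTab 0 = 4 ∧ tTab 3 = 4 ∧ tTab 5 = 4 := by decide
    have h0 : q ≤ ALines 0 := hall _ (ALines_mem_AiA 0) (by rw [tcount]; exact ht.1)
    have h3 : q ≤ ALines 3 := hall _ (ALines_mem_AiA 3) (by rw [tcount]; exact ht.2.1)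
    have h5 : q ≤ ALines 5 := hall _ (ALines_mem_AiA 5) (by rw [tcount]; exact ht.2.2)
    obtain ⟨p, hqe, hp0, hp3⟩ := two_lines_span hq (show (0 : Fin 9) ≠ 3 by decide) h0 h3
    rw [hqe] at h5
    have hp5 : inc p 5 = true := (spanPt_le p 5).mp h5
    have : ∀ p : Fin 16, ¬(inc p 0 = true ∧ inc p 3 = true ∧ inc p 5 = true) := by decide
    exact this p ⟨hp0, hp3, hp5⟩
  · -- six 3-rich lines
    rw [rich_card 3]
    decide
end
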